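/- arXiv:2505.16292 — 4 statements merged into one kernel-verified Lean document; each statement's English description precedes it below -/
import Mathlib

section
/- Let L = β + αΔ + a₁∂_t + a₂∂_t² with complex constants α, β, a₁, a₂. Suppose for every v ∈ ℝⁿ there is a smooth real-valued function θ_v on ℝ × ℝⁿ such that L(e^{iθ_v} G_v^* u) = e^{iθ_v} G_v^* (L u) for all smooth u, where (G_v^* u)(t,x) = u(t, x − tv). Then a₂ = 0. -/
open Complex

/-- Time derivative of a function `u : ℝ → (Fin n → ℝ) → ℂ`. -/
noncomputable def pt {n : ℕ} (u : ℝ → (Fin n → ℝ) → ℂ) : ℝ → (Fin n → ℝ) → ℂ :=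
  fun t x => deriv (fun s => u s x) t

/-- Spatial partial derivative in direction `k`. -/
noncomputable def px {n : ℕ} (k : Fin n) (u : ℝ → (Fin n → ℝ) → ℂ) : ℝ → (Fin n → ℝ) → ℂ :=
  fun t x => deriv (fun s => u t (Function.update x k s)) (x k)

/-- Multi-index spatial derivative `∂^α`. -/
noncomputable def mderiv {n : ℕ} (α : Fin n → ℕ) (u : ℝ → (Fin n → ℝ) → ℂ) : ℝ → (Fin n → ℝ) → ℂ :=
  ((List.finRange n).foldr (fun k f => (px k)^[α k] ∘ f) id) u

/-- Spatial Laplacian. -/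
noncomputable def lap {n : ℕ} (u : ℝ → (Fin n → ℝ) → ℂ) : ℝ → (Fin n → ℝ) → ℂ :=
  fun t x => ∑ k, px k (px k u) t x

/-- Smoothness of `u` jointly in `(t, x)`. -/
def SmoothFn {n : ℕ} (u : ℝ → (Fin n → ℝ) → ℂ) : Prop :=
  ContDiff ℝ (⊤ : ℕ∞) (fun p : ℝ × (Fin n → ℝ) => u p.1 p.2)

/-- Smoothness of a real-valued phase. -/
def SmoothR {n : ℕ} (θ : ℝ → (Fin n → ℝ) → ℝ) : Prop :=
  ContDiff ℝ (⊤ : ℕ∞) (fun p : ℝ × (Fin n → ℝ) => θ p.1 p.2)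

/-- Time derivative of a real-valued function. -/
noncomputable def ptR {n : ℕ} (θ : ℝ → (Fin n → ℝ) → ℝ) : ℝ → (Fin n → ℝ) → ℝ :=
  fun t x => deriv (fun s => θ s x) t

/-- Spatial partial derivative of a real-valued function. -/
noncomputable def pxR {n : ℕ} (k : Fin n) (θ : ℝ → (Fin n → ℝ) → ℝ) : ℝ → (Fin n → ℝ) → ℝ :=
  fun t x => deriv (fun s => θ t (Function.update x k s)) (x k)

/-- The monochromatic plane wave `e_ξ(t,x) = exp(i(τ t + ξ·x))`. -/
noncomputable def planeWave {n : ℕ} (τ : ℝ) (ξ : Fin n → ℝ) : ℝ → (Fin n → ℝ) → ℂ :=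
  fun t x => Complex.exp (Complex.I * ((τ : ℂ) * (t : ℂ) + ∑ k, (ξ k : ℂ) * (x k : ℂ)))

/-- Index set of pairs `(j, α)` with `j + |α| ≤ m`. -/
def idxSet (n m : ℕ) : Finset (ℕ × (Fin n → ℕ)) :=
  ((Finset.range (m + 1)) ×ˢ (Fintype.piFinset fun _ : Fin n => Finset.range (m + 1))).filter
    (fun p => p.1 + ∑ k, p.2 k ≤ m)

/-- Action of the operator `L = Σ_{j+|α|≤m} a_{jα}(t,x) ∂_t^j ∂^α`. -/
noncomputable def applyOp {n : ℕ} (m : ℕ)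
    (a : ℕ × (Fin n → ℕ) → ℝ → (Fin n → ℝ) → ℂ)
    (u : ℝ → (Fin n → ℝ) → ℂ) : ℝ → (Fin n → ℝ) → ℂ :=
  fun t x => ∑ p ∈ idxSet n m, a p t x * (pt^[p.1] (mderiv p.2 u)) t x

/-- Action of a constant-coefficient operator. -/
noncomputable def applyOpC {n : ℕ} (m : ℕ)
    (a : ℕ × (Fin n → ℕ) → ℂ)
    (u : ℝ → (Fin n → ℝ) → ℂ) : ℝ → (Fin n → ℝ) → ℂ :=
  fun t x => ∑ p ∈ idxSet n m, a p * (pt^[p.1] (mderiv p.2 u)) t x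

/-- Symbol of the constant-coefficient operator. -/
noncomputable def symbolOf {n : ℕ} (m : ℕ) (a : ℕ × (Fin n → ℕ) → ℂ)
    (τ : ℝ) (ξ : Fin n → ℝ) : ℂ :=
  ∑ p ∈ idxSet n m, a p * (Complex.I * (τ : ℂ)) ^ p.1 * ∏ k, (Complex.I * (ξ k : ℂ)) ^ (p.2 k)

/-- The operator `L = β + αΔ + a₁∂_t + a₂∂_t²`. -/
noncomputable def opL5 {n : ℕ} (α β a₁ a₂ : ℂ) (u : ℝ → (Fin n → ℝ) → ℂ) :
    ℝ → (Fin n → ℝ) → ℂ :=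
  fun t x => β * u t x + α * lap u t x + a₁ * pt u t x + a₂ * pt (pt u) t x


section GalileiAux

variable {n : ℕ} (θ : ℝ → (Fin n → ℝ) → ℝ)

lemma slice_t (hθ : SmoothR θ) (x : Fin n → ℝ) : ContDiff ℝ (⊤ : ℕ∞) (fun s : ℝ => θ s x) :=
  (hθ.of_le (by simp)).comp (contDiff_id.prodMk contDiff_const)

lemma slice_x (hθ : SmoothR θ) (t : ℝ) (x : Fin n → ℝ) (k : Fin n) :
    ContDiff ℝ (⊤ : ℕ∞) (fun s : ℝ => θ t (Function.update x k s)) :=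
  (hθ.of_le (by simp)).comp (contDiff_const.prodMk (contDiff_update _ x k))

lemma hasDerivAt_ptR (hθ : SmoothR θ) (t : ℝ) (x : Fin n → ℝ) :
    HasDerivAt (fun s => θ s x) (ptR θ t x) t :=
  ((slice_t θ hθ x).differentiable (by norm_num) t).hasDerivAt

lemma hasDerivAt_ptR2 (hθ : SmoothR θ) (t : ℝ) (x : Fin n → ℝ) :
    HasDerivAt (fun s => ptR θ s x) (ptR (ptR θ) t x) t := by
  have h2 : ContDiff ℝ (⊤ : ℕ∞) (deriv fun s => θ s x) :=
    (contDiff_infty_iff_deriv.mp (slice_t θ hθ x)).2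
  exact (h2.differentiable (by norm_num) t).hasDerivAt

lemma hasDerivAt_pxR (hθ : SmoothR θ) (t : ℝ) (x : Fin n → ℝ) (k : Fin n) :
    HasDerivAt (fun s => θ t (Function.update x k s)) (pxR k θ t x) (x k) :=
  ((slice_x θ hθ t x k).differentiable (by norm_num) (x k)).hasDerivAt

lemma pxR_update (t : ℝ) (x : Fin n → ℝ) (k : Fin n) :
    (fun s => pxR k θ t (Function.update x k s))
      = deriv (fun s => θ t (Function.update x k s)) := by
  funext s
  simp only [pxR, Function.update_idem, Function.update_self]

lemma hasDerivAt_pxR2 (hθ : SmoothR θ) (t : ℝ) (x : Fin n → ℝ) (k : Fin n) :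
    HasDerivAt (fun s => pxR k θ t (Function.update x k s)) (pxR k (pxR k θ) t x) (x k) := by
  have h2 : ContDiff ℝ (⊤ : ℕ∞) (deriv fun s => θ t (Function.update x k s)) :=
    (contDiff_infty_iff_deriv.mp (slice_x θ hθ t x k)).2
  have h3 := (h2.differentiable (by norm_num) (x k)).hasDerivAt
  rw [← pxR_update θ t x k] at h3
  exact h3

/-- The gauged, Galilei-shifted plane wave written as a single exponential. -/
noncomputable def Wfn (τ : ℝ) (ξ v : Fin n → ℝ) : ℝ → (Fin n → ℝ) → ℂ :=
  fun t x => Complex.exp (Complex.I *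
    (((θ t x : ℝ) : ℂ) + (τ : ℂ) * (t : ℂ) + ∑ k, (ξ k : ℂ) * ((x k : ℂ) - (t : ℂ) * (v k : ℂ))))

lemma Wfn_eq (τ : ℝ) (ξ v : Fin n → ℝ) :
    Wfn θ τ ξ v = fun t x =>
      Complex.exp (Complex.I * ((θ t x : ℝ) : ℂ)) * planeWave τ ξ t (x - t • v) := by
  funext t x
  simp only [Wfn, planeWave, ← Complex.exp_add, Pi.sub_apply, Pi.smul_apply, smul_eq_mul]
  congr 1
  push_cast
  ring

lemma hasDerivAt_Wfn_t (hθ : SmoothR θ) (τ : ℝ) (ξ v : Fin n → ℝ) (t : ℝ) (x : Fin n → ℝ) :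
    HasDerivAt (fun s => Wfn θ τ ξ v s x)
      (Complex.I * (((ptR θ t x : ℝ) : ℂ) + (τ : ℂ) - ∑ k, (ξ k : ℂ) * (v k : ℂ))
        * Wfn θ τ ξ v t x) t := by
  have h1 : HasDerivAt (fun s : ℝ => ((θ s x : ℝ) : ℂ)) ((ptR θ t x : ℂ)) t :=
    (hasDerivAt_ptR θ hθ t x).ofReal_comp
  have h2 : HasDerivAt (fun s : ℝ => (τ : ℂ) * (s : ℂ)) (τ : ℂ) t := by
    simpa using (hasDerivAt_id t).ofReal_comp.const_mul (τ : ℂ)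
  have h3 : ∀ k : Fin n, HasDerivAt (fun s : ℝ => (ξ k : ℂ) * ((x k : ℂ) - (s : ℂ) * (v k : ℂ)))
      (-((ξ k : ℂ) * (v k : ℂ))) t := by
    intro k
    have := (((hasDerivAt_id t).ofReal_comp.mul_const ((v k : ℂ))).const_sub
      ((x k : ℂ))).const_mul ((ξ k : ℂ))
    simpa using this
  have hsum : HasDerivAt (fun s : ℝ => ∑ k, (ξ k : ℂ) * ((x k : ℂ) - (s : ℂ) * (v k : ℂ)))
      (∑ k, -((ξ k : ℂ) * (v k : ℂ))) t := HasDerivAt.fun_sum (fun k _ => h3 k)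
  have hinner := (((h1.fun_add h2).fun_add hsum).const_mul Complex.I).cexp
  simp only [Wfn]
  convert hinner using 1
  rw [Finset.sum_neg_distrib]
  ring

lemma pt_Wfn (hθ : SmoothR θ) (τ : ℝ) (ξ v : Fin n → ℝ) (t : ℝ) (x : Fin n → ℝ) :
    pt (Wfn θ τ ξ v) t x
      = Complex.I * (((ptR θ t x : ℝ) : ℂ) + (τ : ℂ) - ∑ k, (ξ k : ℂ) * (v k : ℂ))
        * Wfn θ τ ξ v t x :=
  (hasDerivAt_Wfn_t θ hθ τ ξ v t x).deriv

lemma ptpt_Wfn (hθ : SmoothR θ) (τ : ℝ) (ξ v : Fin n → ℝ) (t : ℝ) (x : Fin n → ℝ) :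
    pt (pt (Wfn θ τ ξ v)) t x
      = (Complex.I * ((ptR (ptR θ) t x : ℝ) : ℂ)
          - (((ptR θ t x : ℝ) : ℂ) + (τ : ℂ) - ∑ k, (ξ k : ℂ) * (v k : ℂ)) ^ 2)
        * Wfn θ τ ξ v t x := by
  have hfun : (fun s => pt (Wfn θ τ ξ v) s x)
      = fun s => Complex.I * (((ptR θ s x : ℝ) : ℂ) + (τ : ℂ) - ∑ k, (ξ k : ℂ) * (v k : ℂ))
        * Wfn θ τ ξ v s x :=
    funext fun s => pt_Wfn θ hθ τ ξ v s x
  have hA : HasDerivAt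
      (fun s => Complex.I * (((ptR θ s x : ℝ) : ℂ) + (τ : ℂ) - ∑ k, (ξ k : ℂ) * (v k : ℂ)))
      (Complex.I * ((ptR (ptR θ) t x : ℝ) : ℂ)) t := by
    have := (((hasDerivAt_ptR2 θ hθ t x).ofReal_comp.add_const (τ : ℂ)).sub_const
      (∑ k, (ξ k : ℂ) * (v k : ℂ))).const_mul Complex.I
    simpa using this
  have := (hA.fun_mul (hasDerivAt_Wfn_t θ hθ τ ξ v t x)).deriv
  show deriv (fun s => pt (Wfn θ τ ξ v) s x) t = _
  rw [hfun, this]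
  linear_combination (Wfn θ τ ξ v t x *
    (((ptR θ t x : ℝ) : ℂ) + (τ : ℂ) - ∑ k, (ξ k : ℂ) * (v k : ℂ)) ^ 2) * Complex.I_sq

lemma hasDerivAt_Wfn_x (hθ : SmoothR θ) (τ : ℝ) (ξ v : Fin n → ℝ) (t : ℝ) (x : Fin n → ℝ)
    (k : Fin n) :
    HasDerivAt (fun s => Wfn θ τ ξ v t (Function.update x k s))
      (Complex.I * (((pxR k θ t x : ℝ) : ℂ) + (ξ k : ℂ)) * Wfn θ τ ξ v t x) (x k) := by
  have h1 : HasDerivAt (fun s : ℝ => ((θ t (Function.update x k s) : ℝ) : ℂ))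
      ((pxR k θ t x : ℂ)) (x k) := (hasDerivAt_pxR θ hθ t x k).ofReal_comp
  have h3 : ∀ j : Fin n, HasDerivAt
      (fun s : ℝ => (ξ j : ℂ) * (((Function.update x k s j : ℝ) : ℂ) - (t : ℂ) * (v j : ℂ)))
      (if j = k then (ξ k : ℂ) else 0) (x k) := by
    intro j
    rcases eq_or_ne j k with hjk | hjk
    · subst hjk
      simp only [Function.update_self, if_pos rfl]
      have := (((hasDerivAt_id (x j)).ofReal_comp.sub_const ((t : ℂ) * (v j : ℂ)))).const_mul
        ((ξ j : ℂ))
      simpa using this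
    · simp only [Function.update_of_ne hjk, if_neg hjk]
      exact hasDerivAt_const _ _
  have hsum : HasDerivAt
      (fun s : ℝ => ∑ j, (ξ j : ℂ) * (((Function.update x k s j : ℝ) : ℂ) - (t : ℂ) * (v j : ℂ)))
      (∑ j, if j = k then (ξ k : ℂ) else 0) (x k) := HasDerivAt.fun_sum (fun j _ => h3 j)
  have h2 : HasDerivAt (fun _ : ℝ => (τ : ℂ) * (t : ℂ)) 0 (x k) := hasDerivAt_const _ _
  have hinner := (((h1.fun_add h2).fun_add hsum).const_mul Complex.I).cexp
  have hv : (∑ j, if j = k then (ξ k : ℂ) else 0) = (ξ k : ℂ) := by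
    simp
  rw [hv] at hinner
  convert hinner using 1
  · simp only [Wfn, Function.update_eq_self]
  · simp only [Wfn, Function.update_eq_self]
    ring
  
lemma px_Wfn (hθ : SmoothR θ) (τ : ℝ) (ξ v : Fin n → ℝ) (t : ℝ) (x : Fin n → ℝ) (k : Fin n) :
    px k (Wfn θ τ ξ v) t x
      = Complex.I * (((pxR k θ t x : ℝ) : ℂ) + (ξ k : ℂ)) * Wfn θ τ ξ v t x :=
  (hasDerivAt_Wfn_x θ hθ τ ξ v t x k).deriv

lemma pxpx_Wfn (hθ : SmoothR θ) (τ : ℝ) (ξ v : Fin n → ℝ) (t : ℝ) (x : Fin n → ℝ) (k : Fin n) :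
    px k (px k (Wfn θ τ ξ v)) t x
      = (Complex.I * ((pxR k (pxR k θ) t x : ℝ) : ℂ)
          - (((pxR k θ t x : ℝ) : ℂ) + (ξ k : ℂ)) ^ 2) * Wfn θ τ ξ v t x := by
  have hfun : (fun s => px k (Wfn θ τ ξ v) t (Function.update x k s))
      = fun s => Complex.I * (((pxR k θ t (Function.update x k s) : ℝ) : ℂ) + (ξ k : ℂ))
        * Wfn θ τ ξ v t (Function.update x k s) :=
    funext fun s => px_Wfn θ hθ τ ξ v t (Function.update x k s) k
  have hA : HasDerivAt
      (fun s => Complex.I * (((pxR k θ t (Function.update x k s) : ℝ) : ℂ) + (ξ k : ℂ)))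
      (Complex.I * ((pxR k (pxR k θ) t x : ℝ) : ℂ)) (x k) := by
    have := ((hasDerivAt_pxR2 θ hθ t x k).ofReal_comp.add_const ((ξ k : ℂ))).const_mul Complex.I
    simpa using this
  have hW : HasDerivAt (fun s => Wfn θ τ ξ v t (Function.update x k s))
      (Complex.I * (((pxR k θ t x : ℝ) : ℂ) + (ξ k : ℂ)) * Wfn θ τ ξ v t x) (x k) :=
    hasDerivAt_Wfn_x θ hθ τ ξ v t x k
  have hmul := (hA.fun_mul hW).deriv
  show deriv (fun s => px k (Wfn θ τ ξ v) t (Function.update x k s)) (x k) = _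
  rw [hfun, hmul]
  simp only [Function.update_eq_self]
  linear_combination (Wfn θ τ ξ v t x *
    (((pxR k θ t x : ℝ) : ℂ) + (ξ k : ℂ)) ^ 2) * Complex.I_sq

lemma hfun2 : True := trivial

lemma lap_Wfn (hθ : SmoothR θ) (τ : ℝ) (ξ v : Fin n → ℝ) (t : ℝ) (x : Fin n → ℝ) :
    lap (Wfn θ τ ξ v) t x
      = (∑ k, (Complex.I * ((pxR k (pxR k θ) t x : ℝ) : ℂ)
          - (((pxR k θ t x : ℝ) : ℂ) + (ξ k : ℂ)) ^ 2)) * Wfn θ τ ξ v t x := by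
  show (∑ k, px k (px k (Wfn θ τ ξ v)) t x) = _
  rw [Finset.sum_mul]
  exact Finset.sum_congr rfl fun k _ => pxpx_Wfn θ hθ τ ξ v t x k

lemma opL5_Wfn (hθ : SmoothR θ) (aa ab a1 a2 : ℂ) (τ : ℝ) (ξ v : Fin n → ℝ) (t : ℝ)
    (x : Fin n → ℝ) :
    opL5 aa ab a1 a2 (Wfn θ τ ξ v) t x
      = (ab
          + aa * (∑ k, (Complex.I * ((pxR k (pxR k θ) t x : ℝ) : ℂ)
              - (((pxR k θ t x : ℝ) : ℂ) + (ξ k : ℂ)) ^ 2))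
          + a1 * (Complex.I * (((ptR θ t x : ℝ) : ℂ) + (τ : ℂ) - ∑ k, (ξ k : ℂ) * (v k : ℂ)))
          + a2 * (Complex.I * ((ptR (ptR θ) t x : ℝ) : ℂ)
              - (((ptR θ t x : ℝ) : ℂ) + (τ : ℂ) - ∑ k, (ξ k : ℂ) * (v k : ℂ)) ^ 2))
        * Wfn θ τ ξ v t x := by
  show ab * Wfn θ τ ξ v t x + aa * lap (Wfn θ τ ξ v) t x + a1 * pt (Wfn θ τ ξ v) t x
      + a2 * pt (pt (Wfn θ τ ξ v)) t x = _
  rw [lap_Wfn θ hθ τ ξ v t x, pt_Wfn θ hθ τ ξ v t x, ptpt_Wfn θ hθ τ ξ v t x]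
  ring

end GalileiAux


lemma smoothFn_planeWave {n : ℕ} (τ : ℝ) (ξ : Fin n → ℝ) : SmoothFn (planeWave (n := n) τ ξ) := by
  unfold SmoothFn planeWave
  have h1 : ContDiff ℝ (⊤ : ℕ∞) (fun p : ℝ × (Fin n → ℝ) => (τ : ℂ) * (p.1 : ℂ)) :=
    contDiff_const.mul (Complex.ofRealCLM.contDiff.comp contDiff_fst)
  have h2 : ContDiff ℝ (⊤ : ℕ∞) (fun p : ℝ × (Fin n → ℝ) => ∑ k, (ξ k : ℂ) * (p.2 k : ℂ)) :=
    ContDiff.sum fun k _ => contDiff_const.mul (Complex.ofRealCLM.contDiff.comp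
      ((ContinuousLinearMap.proj (R := ℝ) (φ := fun _ : Fin n => ℝ) k).contDiff.comp contDiff_snd))
  exact (Complex.contDiff_exp (𝕜 := ℝ)).comp (contDiff_const.mul (h1.add h2))

lemma Wfn_zero_eq {n : ℕ} (τ : ℝ) (ξ : Fin n → ℝ) :
    Wfn (fun _ _ => (0 : ℝ)) τ ξ (0 : Fin n → ℝ) = planeWave τ ξ := by
  funext t x
  simp only [Wfn, planeWave, Pi.zero_apply, Complex.ofReal_zero, zero_add, mul_zero, sub_zero]

lemma opL5_plane {n : ℕ} (aa ab a1 a2 : ℂ) (τ : ℝ) (ξ : Fin n → ℝ) (t : ℝ) (x : Fin n → ℝ) :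
    opL5 aa ab a1 a2 (planeWave τ ξ) t x
      = (ab + aa * (∑ k, -((ξ k : ℂ)) ^ 2) + a1 * (Complex.I * (τ : ℂ)) + a2 * (-((τ : ℂ)) ^ 2))
        * planeWave τ ξ t x := by
  have h0 : SmoothR (fun _ _ => (0 : ℝ) : ℝ → (Fin n → ℝ) → ℝ) := contDiff_const
  have h := opL5_Wfn (fun _ _ => (0 : ℝ)) h0 aa ab a1 a2 τ ξ 0 t x
  rw [Wfn_zero_eq] at h
  rw [h]
  have hpt : ∀ (t' : ℝ) (x' : Fin n → ℝ), ptR (fun _ _ => (0 : ℝ)) t' x' = 0 := by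
    intro t' x'; simp [ptR]
  have hpt2 : ptR (ptR (fun _ _ => (0 : ℝ))) t x = 0 := by simp [ptR]
  have hpx : ∀ (k : Fin n) (x' : Fin n → ℝ), pxR k (fun _ _ => (0 : ℝ)) t x' = 0 := by
    intro k x'; simp [pxR]
  have hpx2 : ∀ k : Fin n, pxR k (pxR k (fun _ _ => (0 : ℝ))) t x = 0 := by
    intro k; simp [pxR]
  rw [hpt, hpt2]
  simp only [hpx2, hpx, Complex.ofReal_zero, mul_zero, zero_sub, zero_add, Pi.zero_apply,
    Finset.sum_const_zero, sub_zero]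

/-- Galilei invariance with local gauge forces `a₂ = 0`. -/
theorem second_time_derivative_vanishes {n : ℕ} (hn : 1 ≤ n) (α β a₁ a₂ : ℂ)
    (h : ∀ v : Fin n → ℝ, ∃ θ : ℝ → (Fin n → ℝ) → ℝ, SmoothR θ ∧
      ∀ u : ℝ → (Fin n → ℝ) → ℂ, SmoothFn u → ∀ (t : ℝ) (x : Fin n → ℝ),
        opL5 α β a₁ a₂
            (fun t' x' => Complex.exp (Complex.I * ((θ t' x' : ℝ) : ℂ)) * u t' (x' - t' • v)) t x
          = Complex.exp (Complex.I * ((θ t x : ℝ) : ℂ)) * opL5 α β a₁ a₂ u t (x - t • v)) :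
    a₂ = 0 := by
  set i0 : Fin n := ⟨0, hn⟩ with hi0
  set v : Fin n → ℝ := Pi.single i0 1 with hv
  obtain ⟨θ, hθ, hL⟩ := h v
  have key : ∀ (ξ : Fin n → ℝ) (τ : ℝ),
      β + α * (∑ k, (Complex.I * ((pxR k (pxR k θ) 0 0 : ℝ) : ℂ)
            - (((pxR k θ 0 0 : ℝ) : ℂ) + (ξ k : ℂ)) ^ 2))
        + a₁ * (Complex.I * (((ptR θ 0 0 : ℝ) : ℂ) + (τ : ℂ) - ∑ k, (ξ k : ℂ) * (v k : ℂ)))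
        + a₂ * (Complex.I * ((ptR (ptR θ) 0 0 : ℝ) : ℂ)
            - (((ptR θ 0 0 : ℝ) : ℂ) + (τ : ℂ) - ∑ k, (ξ k : ℂ) * (v k : ℂ)) ^ 2)
      = β + α * (∑ k, -((ξ k : ℂ)) ^ 2) + a₁ * (Complex.I * (τ : ℂ))
        + a₂ * (-((τ : ℂ)) ^ 2) := by
    intro ξ τ
    have h1 := hL (planeWave τ ξ) (smoothFn_planeWave τ ξ) 0 0
    rw [← Wfn_eq θ τ ξ v] at h1
    rw [opL5_Wfn θ hθ α β a₁ a₂ τ ξ v 0 0] at h1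
    simp only [zero_smul, sub_zero] at h1
    rw [opL5_plane α β a₁ a₂ τ ξ 0 0] at h1
    have hW00 : Wfn θ τ ξ v 0 0
        = Complex.exp (Complex.I * ((θ 0 0 : ℝ) : ℂ)) * planeWave τ ξ 0 0 := by
      have := congrFun (congrFun (Wfn_eq θ τ ξ v) 0) 0
      simpa using this
    rw [hW00] at h1
    have hE : Complex.exp (Complex.I * ((θ 0 0 : ℝ) : ℂ)) ≠ 0 := Complex.exp_ne_zero _
    have hP : planeWave τ ξ 0 0 ≠ 0 := Complex.exp_ne_zero _
    exact mul_right_cancel₀ (mul_ne_zero hE hP) (by linear_combination h1)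
  have hc0 : (∑ k, (((0 : Fin n → ℝ) k : ℝ) : ℂ) * ((v k : ℝ) : ℂ)) = 0 := by
    simp
  have hcv : (∑ k, ((v k : ℝ) : ℂ) * ((v k : ℝ) : ℂ)) = 1 := by
    have hvk : ∀ k : Fin n, v k = if k = i0 then (1 : ℝ) else 0 := by
      intro k; simp [hv, Pi.single_apply]
    have : ∀ k : Fin n, ((v k : ℝ) : ℂ) * ((v k : ℝ) : ℂ) = if k = i0 then 1 else 0 := by
      intro k
      rcases eq_or_ne k i0 with hk | hk
      · rw [hvk k, if_pos hk, if_pos hk]; norm_num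
      · rw [hvk k, if_neg hk, if_neg hk]; norm_num
    rw [Finset.sum_congr rfl fun k _ => this k]
    simp
  have e1 := key 0 1
  have e2 := key 0 (-1)
  have e3 := key v 1
  have e4 := key v (-1)
  push_cast at e1 e2 e3 e4
  linear_combination (e3 - e4) / 4 - (e1 - e2) / 4 + a₂ * hc0 - a₂ * hcv
end

section
/- Let α ∈ ℂ \ {0}, a₁ ∈ ℂ, β ∈ ℂ, and L = β + αΔ + a₁∂_t. Fix v ∈ ℝⁿ and a smooth real-valued θ on ℝ × ℝⁿ. If L(e^{iθ} G_v^* u) = e^{iθ} G_v^* (L u) holds for all plane waves u = e_ξ (ξ ∈ ℝ × ℝⁿ), then ∇θ and ∂_tθ satisfy: 2α∇θ + i a₁ v = 0 and α(iΔθ − |∇θ|²) + i a₁ ∂_t θ = 0 everywhere. -/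
open Complex

/-- The operator `L = β + αΔ + a₁∂_t`. -/
noncomputable def opL6 {n : ℕ} (α β a₁ : ℂ) (u : ℝ → (Fin n → ℝ) → ℂ) :
    ℝ → (Fin n → ℝ) → ℂ :=
  fun t x => β * u t x + α * lap u t x + a₁ * pt u t x

section Aux

lemma hasDerivAt_coord {n : ℕ} (G : ℝ × (Fin n → ℝ) → ℝ) (hG : Differentiable ℝ G)
    (t : ℝ) (x : Fin n → ℝ) (k : Fin n) :
    HasDerivAt (fun s => G (t, Function.update x k s)) (fderiv ℝ G (t, x) (0, Pi.single k 1)) (x k) := by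
  have hinner : HasDerivAt (fun s : ℝ => ((t, Function.update x k s) : ℝ × (Fin n → ℝ)))
      ((0 : ℝ), Pi.single k 1) (x k) := by
    have heq : (fun s : ℝ => ((t, Function.update x k s) : ℝ × (Fin n → ℝ)))
        = fun s => ((t, x) : ℝ × (Fin n → ℝ)) + (s - x k) • (((0:ℝ), Pi.single k (1:ℝ)) : ℝ × (Fin n → ℝ)) := by
      funext s
      refine Prod.ext (by simp) ?_
      funext j
      by_cases hj : j = k
      · subst hj; simp [Function.update_self, Pi.single_apply]
      · simp [Function.update_of_ne hj, Pi.single_apply, hj]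
    rw [heq]
    have h1 : HasDerivAt (fun s : ℝ => (s - x k)) 1 (x k) := (hasDerivAt_id _).sub_const _
    simpa using (h1.smul_const (((0:ℝ), Pi.single k (1:ℝ)) : ℝ × (Fin n → ℝ))).const_add
      ((t,x) : ℝ × (Fin n → ℝ))
  have hf : HasFDerivAt G (fderiv ℝ G (t,x)) (t, Function.update x k (x k)) := by
    rw [Function.update_eq_self]; exact (hG (t,x)).hasFDerivAt
  exact hf.comp_hasDerivAt (x k) hinner

lemma hasDerivAt_timeArg {n : ℕ} (G : ℝ × (Fin n → ℝ) → ℝ) (hG : Differentiable ℝ G)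
    (t : ℝ) (x : Fin n → ℝ) :
    HasDerivAt (fun s => G (s, x)) (fderiv ℝ G (t, x) (1, 0)) t :=
  (hG (t,x)).hasFDerivAt.comp_hasDerivAt t ((hasDerivAt_id t).prodMk (hasDerivAt_const t x))

lemma hasDerivAt_cexp_real {f : ℝ → ℝ} {f' x : ℝ} (hf : HasDerivAt f f' x) :
    HasDerivAt (fun s => Complex.exp (Complex.I * (f s : ℂ)))
      (Complex.I * f' * Complex.exp (Complex.I * (f x : ℂ))) x := by
  have := ((hf.ofReal_comp).const_mul Complex.I).cexp
  convert this using 1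
  ring

lemma sum_update {n : ℕ} (ξ x : Fin n → ℝ) (k : Fin n) (s : ℝ) :
    ∑ j, ξ j * Function.update x k s j = (∑ j, ξ j * x j) + (s - x k) * ξ k := by
  have : ∀ j, ξ j * Function.update x k s j
      = ξ j * x j + (if j = k then (s - x k) * ξ k else 0) := by
    intro j
    by_cases hj : j = k
    · subst hj; simp [Function.update_self]; ring
    · simp [Function.update_of_ne hj, hj]
  simp [this, Finset.sum_add_distrib]

lemma sum_update_sub {n : ℕ} (ξ x c : Fin n → ℝ) (k : Fin n) (s : ℝ) :
    ∑ j, ξ j * (Function.update x k s j - c j) = (∑ j, ξ j * (x j - c j)) + (s - x k) * ξ k := by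
  simp only [mul_sub, Finset.sum_sub_distrib, sum_update]
  ring

lemma sum_linear_t {n : ℕ} (ξ x v : Fin n → ℝ) (s : ℝ) :
    ∑ j, ξ j * (x j - s * v j) = (∑ j, ξ j * x j) - s * ∑ j, ξ j * v j := by
  simp [mul_sub, Finset.sum_sub_distrib, Finset.mul_sum, mul_left_comm]

lemma planeWave_eq {n : ℕ} (τ : ℝ) (ξ : Fin n → ℝ) (t : ℝ) (x : Fin n → ℝ) :
    planeWave τ ξ t x = Complex.exp (Complex.I * ((τ * t + ∑ j, ξ j * x j : ℝ) : ℂ)) := by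
  unfold planeWave
  congr 1
  push_cast
  ring

lemma hasDerivAt_planeWave_x {n : ℕ} (τ : ℝ) (ξ : Fin n → ℝ) (t : ℝ) (x : Fin n → ℝ) (k : Fin n) :
    HasDerivAt (fun s => planeWave τ ξ t (Function.update x k s))
      (Complex.I * ξ k * planeWave τ ξ t x) (x k) := by
  have hphase : HasDerivAt (fun s : ℝ => τ * t + ∑ j, ξ j * Function.update x k s j) (ξ k) (x k) := by
    have heq : (fun s : ℝ => τ * t + ∑ j, ξ j * Function.update x k s j)
        = fun s => (τ * t + ∑ j, ξ j * x j) + (s - x k) * ξ k := by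
      funext s; rw [sum_update]; ring
    rw [heq]
    simpa using (((hasDerivAt_id (x k)).sub_const (x k)).mul_const (ξ k)).const_add
      (τ * t + ∑ j, ξ j * x j)
  have h2 := hasDerivAt_cexp_real hphase
  simp only [planeWave_eq]
  simpa [Function.update_eq_self] using h2

lemma px_planeWave {n : ℕ} (τ : ℝ) (ξ : Fin n → ℝ) (k : Fin n) (t : ℝ) (x : Fin n → ℝ) :
    px k (planeWave τ ξ) t x = Complex.I * ξ k * planeWave τ ξ t x := by
  unfold px
  exact (hasDerivAt_planeWave_x τ ξ t x k).deriv

lemma pxx_planeWave {n : ℕ} (τ : ℝ) (ξ : Fin n → ℝ) (k : Fin n) (t : ℝ) (x : Fin n → ℝ) :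
    px k (px k (planeWave τ ξ)) t x = -((ξ k : ℂ))^2 * planeWave τ ξ t x := by
  have heq : (fun s => px k (planeWave τ ξ) t (Function.update x k s))
      = fun s => Complex.I * ξ k * planeWave τ ξ t (Function.update x k s) := by
    funext s; exact px_planeWave τ ξ k t (Function.update x k s)
  conv_lhs => rw [px, heq]
  rw [((hasDerivAt_planeWave_x τ ξ t x k).const_mul (Complex.I * ξ k)).deriv]
  linear_combination (ξ k : ℂ)^2 * planeWave τ ξ t x * Complex.I_sq

lemma pt_planeWave {n : ℕ} (τ : ℝ) (ξ : Fin n → ℝ) (t : ℝ) (x : Fin n → ℝ) :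
    pt (planeWave τ ξ) t x = Complex.I * τ * planeWave τ ξ t x := by
  have hphase : HasDerivAt (fun s : ℝ => τ * s + ∑ j, ξ j * x j) τ t := by
    simpa using ((hasDerivAt_id t).const_mul τ).add_const (∑ j, ξ j * x j)
  have h2 := hasDerivAt_cexp_real hphase
  unfold pt
  simp only [planeWave_eq]
  exact h2.deriv

lemma opL6_planeWave {n : ℕ} (α β a₁ : ℂ) (τ : ℝ) (ξ : Fin n → ℝ) (t : ℝ) (y : Fin n → ℝ) :
    opL6 α β a₁ (planeWave τ ξ) t y
      = (β + α * (∑ k, -((ξ k : ℂ))^2) + a₁ * (Complex.I * τ)) * planeWave τ ξ t y := by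
  unfold opL6 lap
  rw [pt_planeWave]
  simp only [pxx_planeWave]
  rw [← Finset.sum_mul]
  ring

section Theta
variable {n : ℕ} (θ : ℝ → (Fin n → ℝ) → ℝ)
  (hθ : ContDiff ℝ (⊤ : ℕ∞) (fun p : ℝ × (Fin n → ℝ) => θ p.1 p.2))
include hθ

lemma hasDerivAt_theta_x (t : ℝ) (x : Fin n → ℝ) (k : Fin n) :
    HasDerivAt (fun s => θ t (Function.update x k s)) (pxR k θ t x) (x k) := by
  have h := hasDerivAt_coord (fun p : ℝ × (Fin n → ℝ) => θ p.1 p.2) (hθ.differentiable (by simp)) t x k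
  have hd : pxR k θ t x
      = fderiv ℝ (fun p : ℝ × (Fin n → ℝ) => θ p.1 p.2) (t, x) (0, Pi.single k 1) := h.deriv
  rw [hd]; exact h

lemma hasDerivAt_theta_t (t : ℝ) (x : Fin n → ℝ) :
    HasDerivAt (fun s => θ s x) (ptR θ t x) t := by
  have h := hasDerivAt_timeArg (fun p : ℝ × (Fin n → ℝ) => θ p.1 p.2) (hθ.differentiable (by simp)) t x
  have hd : ptR θ t x
      = fderiv ℝ (fun p : ℝ × (Fin n → ℝ) => θ p.1 p.2) (t, x) (1, 0) := h.deriv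
  rw [hd]; exact h

lemma smooth_pxR (k : Fin n) :
    ContDiff ℝ (⊤ : ℕ∞) (fun p : ℝ × (Fin n → ℝ) => pxR k θ p.1 p.2) := by
  have h1 : ContDiff ℝ (⊤ : ℕ∞) (fun p : ℝ × (Fin n → ℝ) =>
      fderiv ℝ (fun q : ℝ × (Fin n → ℝ) => θ q.1 q.2) p (0, Pi.single k 1)) :=
    (hθ.fderiv_right (by simp)).clm_apply contDiff_const
  have heq : (fun p : ℝ × (Fin n → ℝ) => pxR k θ p.1 p.2)
      = fun p => fderiv ℝ (fun q : ℝ × (Fin n → ℝ) => θ q.1 q.2) p (0, Pi.single k 1) := by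
    funext p
    exact (hasDerivAt_coord (fun q : ℝ × (Fin n → ℝ) => θ q.1 q.2)
      (hθ.differentiable (by simp)) p.1 p.2 k).deriv
  rw [heq]; exact h1

lemma hasDerivAt_pxR_x (k : Fin n) (t : ℝ) (x : Fin n → ℝ) :
    HasDerivAt (fun s => pxR k θ t (Function.update x k s)) (pxR k (pxR k θ) t x) (x k) :=
  hasDerivAt_theta_x (pxR k θ) (smooth_pxR θ hθ k) t x k

end Theta

/-- The modulated wave `e^{iθ} G_v^* e_ξ` written as a single exponential. -/
noncomputable def Efn {n : ℕ} (θ : ℝ → (Fin n → ℝ) → ℝ) (v : Fin n → ℝ)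
    (τ : ℝ) (ξ : Fin n → ℝ) : ℝ → (Fin n → ℝ) → ℂ :=
  fun t x => Complex.exp (Complex.I * ((θ t x + (τ * t + ∑ j, ξ j * (x j - t * v j)) : ℝ) : ℂ))

section Efacts
variable {n : ℕ} (θ : ℝ → (Fin n → ℝ) → ℝ)
  (hθ : ContDiff ℝ (⊤ : ℕ∞) (fun p : ℝ × (Fin n → ℝ) => θ p.1 p.2))
  (v : Fin n → ℝ) (τ : ℝ) (ξ : Fin n → ℝ)
omit hθ in
lemma Efn_eq (t : ℝ) (x : Fin n → ℝ) :
    Complex.exp (Complex.I * ((θ t x : ℝ) : ℂ)) * planeWave τ ξ t (x - t • v)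
      = Efn θ v τ ξ t x := by
  rw [planeWave_eq, ← Complex.exp_add]
  unfold Efn
  congr 1
  have : ∀ j, (x - t • v) j = x j - t * v j := by
    intro j; simp [Pi.sub_apply, Pi.smul_apply, smul_eq_mul]
  simp only [this]
  push_cast
  ring

include hθ

lemma hasDerivAt_Efn_x (t : ℝ) (x : Fin n → ℝ) (k : Fin n) :
    HasDerivAt (fun s => Efn θ v τ ξ t (Function.update x k s))
      (Complex.I * ((pxR k θ t x + ξ k : ℝ) : ℂ) * Efn θ v τ ξ t x) (x k) := by
  have hθx := hasDerivAt_theta_x θ hθ t x k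
  have hlin : HasDerivAt
      (fun s : ℝ => τ * t + ∑ j, ξ j * (Function.update x k s j - t * v j)) (ξ k) (x k) := by
    have heq : (fun s : ℝ => τ * t + ∑ j, ξ j * (Function.update x k s j - t * v j))
        = fun s => (τ * t + ∑ j, ξ j * (x j - t * v j)) + (s - x k) * ξ k := by
      funext s; rw [sum_update_sub]; ring
    rw [heq]
    simpa using (((hasDerivAt_id (x k)).sub_const (x k)).mul_const (ξ k)).const_add
      (τ * t + ∑ j, ξ j * (x j - t * v j))
  have h2 := hasDerivAt_cexp_real (hθx.add hlin)
  simp only [Function.update_eq_self, Pi.add_apply] at h2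
  exact h2

lemma px_Efn (k : Fin n) (t : ℝ) (x : Fin n → ℝ) :
    px k (Efn θ v τ ξ) t x
      = Complex.I * ((pxR k θ t x + ξ k : ℝ) : ℂ) * Efn θ v τ ξ t x := by
  unfold px
  exact (hasDerivAt_Efn_x θ hθ v τ ξ t x k).deriv

lemma pxx_Efn (k : Fin n) (t : ℝ) (x : Fin n → ℝ) :
    px k (px k (Efn θ v τ ξ)) t x
      = (Complex.I * ((pxR k (pxR k θ) t x : ℝ) : ℂ)
          - ((pxR k θ t x + ξ k : ℝ) : ℂ)^2) * Efn θ v τ ξ t x := by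
  have heq : (fun s => px k (Efn θ v τ ξ) t (Function.update x k s))
      = fun s => Complex.I * ((pxR k θ t (Function.update x k s) + ξ k : ℝ) : ℂ)
          * Efn θ v τ ξ t (Function.update x k s) := by
    funext s; exact px_Efn θ hθ v τ ξ k t (Function.update x k s)
  have hw : HasDerivAt
      (fun s => Complex.I * ((pxR k θ t (Function.update x k s) + ξ k : ℝ) : ℂ))
      (Complex.I * ((pxR k (pxR k θ) t x : ℝ) : ℂ)) (x k) :=
    (((hasDerivAt_pxR_x θ hθ k t x).add_const (ξ k)).ofReal_comp).const_mul Complex.I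
  have hprod := hw.mul (hasDerivAt_Efn_x θ hθ v τ ξ t x k)
  have : px k (px k (Efn θ v τ ξ)) t x
      = deriv (fun s => px k (Efn θ v τ ξ) t (Function.update x k s)) (x k) := rfl
  rw [this, heq, show (fun s => Complex.I * ((pxR k θ t (Function.update x k s) + ξ k : ℝ) : ℂ)
      * Efn θ v τ ξ t (Function.update x k s)) = (fun s => Complex.I * ((pxR k θ t (Function.update x k s) + ξ k : ℝ) : ℂ))
      * (fun s => Efn θ v τ ξ t (Function.update x k s)) from rfl, hprod.deriv]
  simp only [Function.update_eq_self]
  push_cast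
  linear_combination ((pxR k θ t x : ℂ) + (ξ k : ℂ))^2 * Efn θ v τ ξ t x * Complex.I_sq

lemma pt_Efn (t : ℝ) (x : Fin n → ℝ) :
    pt (Efn θ v τ ξ) t x
      = Complex.I * ((ptR θ t x + (τ - ∑ j, ξ j * v j) : ℝ) : ℂ) * Efn θ v τ ξ t x := by
  have hθt := hasDerivAt_theta_t θ hθ t x
  have hlin : HasDerivAt (fun s : ℝ => τ * s + ∑ j, ξ j * (x j - s * v j))
      (τ - ∑ j, ξ j * v j) t := by
    have heq : (fun s : ℝ => τ * s + ∑ j, ξ j * (x j - s * v j))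
        = fun s => (∑ j, ξ j * x j) + s * (τ - ∑ j, ξ j * v j) := by
      funext s; rw [sum_linear_t]; ring
    rw [heq]
    simpa using ((hasDerivAt_id t).mul_const (τ - ∑ j, ξ j * v j)).const_add (∑ j, ξ j * x j)
  have h2 := hasDerivAt_cexp_real (hθt.add hlin)
  unfold pt
  exact h2.deriv

lemma opL6_Efn (α β a₁ : ℂ) (t : ℝ) (x : Fin n → ℝ) :
    opL6 α β a₁ (Efn θ v τ ξ) t x
      = (β + α * (∑ k, (Complex.I * ((pxR k (pxR k θ) t x : ℝ) : ℂ)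
            - ((pxR k θ t x + ξ k : ℝ) : ℂ)^2))
          + a₁ * (Complex.I * ((ptR θ t x + (τ - ∑ j, ξ j * v j) : ℝ) : ℂ)))
        * Efn θ v τ ξ t x := by
  unfold opL6 lap
  rw [pt_Efn θ hθ v τ ξ,
    show (∑ k, px k (px k (Efn θ v τ ξ)) t x)
      = ∑ k, (Complex.I * ((pxR k (pxR k θ) t x : ℝ) : ℂ)
          - ((pxR k θ t x + ξ k : ℝ) : ℂ)^2) * Efn θ v τ ξ t x from
      Finset.sum_congr rfl fun k _ => pxx_Efn θ hθ v τ ξ k t x,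
    ← Finset.sum_mul]
  ring

end Efacts
end Aux

/-- the phase equations for `θ`. -/
theorem phase_equations {n : ℕ} (hn : 1 ≤ n) (α : ℂ) (hα : α ≠ 0) (a₁ β : ℂ)
    (v : Fin n → ℝ) (θ : ℝ → (Fin n → ℝ) → ℝ) (hθ : SmoothR θ)
    (h : ∀ (τ : ℝ) (ξ : Fin n → ℝ) (t : ℝ) (x : Fin n → ℝ),
      opL6 α β a₁
          (fun t' x' => Complex.exp (Complex.I * ((θ t' x' : ℝ) : ℂ)) *
            planeWave τ ξ t' (x' - t' • v)) t x
        = Complex.exp (Complex.I * ((θ t x : ℝ) : ℂ)) * opL6 α β a₁ (planeWave τ ξ) t (x - t • v)) :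
    (∀ (t : ℝ) (x : Fin n → ℝ) (k : Fin n),
        2 * α * ((pxR k θ t x : ℝ) : ℂ) + Complex.I * a₁ * ((v k : ℝ) : ℂ) = 0) ∧
    (∀ (t : ℝ) (x : Fin n → ℝ),
        α * (Complex.I * (((∑ k, pxR k (pxR k θ) t x : ℝ)) : ℂ)
              - (((∑ k, (pxR k θ t x) ^ 2 : ℝ)) : ℂ))
          + Complex.I * a₁ * ((ptR θ t x : ℝ) : ℂ) = 0) := by
  classical
  have hθ' : ContDiff ℝ (⊤ : ℕ∞) (fun p : ℝ × (Fin n → ℝ) => θ p.1 p.2) := hθ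
  have master : ∀ (τ : ℝ) (ξ : Fin n → ℝ) (t : ℝ) (x : Fin n → ℝ),
      β + α * (∑ k, (Complex.I * ((pxR k (pxR k θ) t x : ℝ) : ℂ)
            - ((pxR k θ t x + ξ k : ℝ) : ℂ)^2))
        + a₁ * (Complex.I * ((ptR θ t x + (τ - ∑ j, ξ j * v j) : ℝ) : ℂ))
      = β + α * (∑ k, -((ξ k : ℂ))^2) + a₁ * (Complex.I * (τ : ℂ)) := by
    intro τ ξ t x
    have hh := h τ ξ t x
    have hUE : (fun t' x' => Complex.exp (Complex.I * ((θ t' x' : ℝ) : ℂ)) *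
        planeWave τ ξ t' (x' - t' • v)) = Efn θ v τ ξ :=
      funext fun t' => funext fun x' => Efn_eq θ v τ ξ t' x'
    rw [hUE, opL6_Efn θ hθ' v τ ξ α β a₁ t x, opL6_planeWave] at hh
    have hE0 : Efn θ v τ ξ t x ≠ 0 := by unfold Efn; exact Complex.exp_ne_zero _
    refine mul_right_cancel₀ hE0 ?_
    rw [hh, ← Efn_eq θ v τ ξ t x]
    ring
  constructor
  · intro t x k
    have H1 := master 0 (Pi.single k 1) t x
    have H0 := master 0 0 t x
    simp only [Pi.zero_apply, add_zero, zero_mul, mul_zero, Finset.sum_const_zero, sub_zero,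
      Complex.ofReal_zero, neg_zero, zero_pow, ne_eq, OfNat.ofNat_ne_zero,
      not_false_iff] at H0
    have hsplit : (∑ j, (Complex.I * ((pxR j (pxR j θ) t x : ℝ) : ℂ)
          - ((pxR j θ t x + (Pi.single k 1 : Fin n → ℝ) j : ℝ) : ℂ)^2))
        = (∑ j, (Complex.I * ((pxR j (pxR j θ) t x : ℝ) : ℂ)
            - ((pxR j θ t x : ℝ) : ℂ)^2))
          - (2 * ((pxR k θ t x : ℝ) : ℂ) + 1) := by
      have step : ∀ j ∈ Finset.univ, (Complex.I * ((pxR j (pxR j θ) t x : ℝ) : ℂ)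
            - ((pxR j θ t x + (Pi.single k 1 : Fin n → ℝ) j : ℝ) : ℂ)^2)
          = (Complex.I * ((pxR j (pxR j θ) t x : ℝ) : ℂ) - ((pxR j θ t x : ℝ) : ℂ)^2)
            - (if j = k then (2 * ((pxR k θ t x : ℝ) : ℂ) + 1) else 0) := by
        intro j _
        by_cases hj : j = k
        · subst hj
          rw [Pi.single_eq_same, if_pos rfl]
          push_cast
          ring
        · rw [Pi.single_eq_of_ne hj, if_neg hj]
          push_cast
          ring
      rw [Finset.sum_congr rfl step, Finset.sum_sub_distrib,
        Finset.sum_ite_eq' Finset.univ k (fun _ => 2 * ((pxR k θ t x : ℝ) : ℂ) + 1)]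
      simp
    have hv : (∑ j, (Pi.single k 1 : Fin n → ℝ) j * v j) = v k := by
      have step : ∀ j ∈ Finset.univ, (Pi.single k 1 : Fin n → ℝ) j * v j
          = if j = k then v k else 0 := by
        intro j _
        by_cases hj : j = k
        · subst hj; rw [Pi.single_eq_same, if_pos rfl, one_mul]
        · rw [Pi.single_eq_of_ne hj, if_neg hj, zero_mul]
      rw [Finset.sum_congr rfl step, Finset.sum_ite_eq' Finset.univ k (fun _ => v k)]
      simp
    have hr : (∑ j, -(((Pi.single k 1 : Fin n → ℝ) j : ℂ))^2) = -1 := by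
      have step : ∀ j ∈ Finset.univ, -(((Pi.single k 1 : Fin n → ℝ) j : ℂ))^2
          = if j = k then (-1 : ℂ) else 0 := by
        intro j _
        by_cases hj : j = k
        · subst hj; rw [Pi.single_eq_same, if_pos rfl]; norm_num
        · rw [Pi.single_eq_of_ne hj, if_neg hj]; norm_num
      rw [Finset.sum_congr rfl step, Finset.sum_ite_eq' Finset.univ k (fun _ => (-1 : ℂ))]
      simp
    rw [hsplit, hv, hr] at H1
    push_cast at H0 H1
    linear_combination H0 - H1
  · intro t x
    have H0 := master 0 0 t x
    simp only [Pi.zero_apply, add_zero, zero_mul, mul_zero, Finset.sum_const_zero, sub_zero,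
      Complex.ofReal_zero, neg_zero, zero_pow, ne_eq, OfNat.ofNat_ne_zero,
      not_false_iff] at H0
    have hsum : (∑ k, (Complex.I * ((pxR k (pxR k θ) t x : ℝ) : ℂ)
          - ((pxR k θ t x : ℝ) : ℂ)^2))
        = Complex.I * ((∑ k, pxR k (pxR k θ) t x : ℝ) : ℂ)
          - ((∑ k, (pxR k θ t x)^2 : ℝ) : ℂ) := by
      push_cast
      rw [Finset.sum_sub_distrib, Finset.mul_sum]
    rw [hsum] at H0
    linear_combination H0
end

section
/- Let λ ∈ ℝ \ {0} and let p(τ, ξ) be a complex polynomial on ℝ × ℝⁿ of total degree m satisfying p(τ − ξ·v − (λ/2)|v|², ξ + λv) = p(τ, ξ) for all (τ, ξ) ∈ ℝ × ℝⁿ and all v ∈ ℝⁿ, and assume additionally p(τ, Rξ) = p(τ, ξ) for all R ∈ O(n). Then m is even and there exist complex constants c_0, …, c_{m/2} with p(τ,ξ) = Σ_{k=0}^{m/2} c_k (2λτ + |ξ|²)^k. -/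
open Complex

/- STATEMENT 14: a Galilei- and rotation-invariant polynomial of degree `m` is a
polynomial in `2λτ + |ξ|²`, and `m` is even. -/

/-- A complex multivariate polynomial vanishing at all real points is zero. -/
lemma mv_eval_real_zero {σ : Type*} (D : MvPolynomial σ ℂ)
    (h : ∀ x : σ → ℝ, MvPolynomial.eval (fun s => (x s : ℂ)) D = 0) : D = 0 := by
  classical
  set A : MvPolynomial σ ℝ :=
    ∑ α ∈ D.support, MvPolynomial.monomial α ((D.coeff α).re) with hAdef
  set B : MvPolynomial σ ℝ :=
    ∑ α ∈ D.support, MvPolynomial.monomial α ((D.coeff α).im) with hBdef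
  have hA : ∀ β, A.coeff β = (D.coeff β).re := by
    intro β
    rw [hAdef, MvPolynomial.coeff_sum]
    simp only [MvPolynomial.coeff_monomial]
    rw [Finset.sum_ite_eq' D.support β]
    split_ifs with hb
    · rfl
    · rw [MvPolynomial.notMem_support_iff.mp hb]; simp
  have hB : ∀ β, B.coeff β = (D.coeff β).im := by
    intro β
    rw [hBdef, MvPolynomial.coeff_sum]
    simp only [MvPolynomial.coeff_monomial]
    rw [Finset.sum_ite_eq' D.support β]
    split_ifs with hb
    · rfl
    · rw [MvPolynomial.notMem_support_iff.mp hb]; simp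
  have hD : D = MvPolynomial.map Complex.ofRealHom A
      + MvPolynomial.C Complex.I * MvPolynomial.map Complex.ofRealHom B := by
    apply MvPolynomial.ext
    intro β
    simp only [MvPolynomial.coeff_add, MvPolynomial.coeff_map, MvPolynomial.coeff_C_mul,
      hA, hB]
    rw [eq_comm]
    simp [Complex.ext_iff]
  have emap : ∀ (E : MvPolynomial σ ℝ) (x : σ → ℝ),
      MvPolynomial.eval (fun s => (x s : ℂ)) (MvPolynomial.map Complex.ofRealHom E)
        = ((MvPolynomial.eval x E : ℝ) : ℂ) := by
    intro E x
    rw [MvPolynomial.eval_map]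
    have := MvPolynomial.eval₂_comp_left Complex.ofRealHom (RingHom.id ℝ) x E
    simpa [MvPolynomial.eval₂_id, Function.comp_def] using this.symm
  have hAB : ∀ x : σ → ℝ, MvPolynomial.eval x A = 0 ∧ MvPolynomial.eval x B = 0 := by
    intro x
    have hx := h x
    rw [hD] at hx
    simp only [map_add, map_mul, MvPolynomial.eval_C, emap] at hx
    constructor
    · have := congrArg Complex.re hx; simpa using this
    · have := congrArg Complex.im hx; simpa using this
  have hA0 : A = 0 := MvPolynomial.funext (fun x => by simpa using (hAB x).1)
  have hB0 : B = 0 := MvPolynomial.funext (fun x => by simpa using (hAB x).2)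
  rw [hD, hA0, hB0]
  simp

/-- a Galilei- and rotation-invariant polynomial of degree `m` is a
polynomial in `2λτ + |ξ|²`, and `m` is even. -/
theorem galilei_invariant_symbol {n : ℕ} (hn : 2 ≤ n) (lam : ℝ) (hlam : lam ≠ 0) (m : ℕ)
    (p : ℝ → (Fin n → ℝ) → ℂ)
    (hpoly : ∃ P : MvPolynomial (Option (Fin n)) ℂ, P.totalDegree = m ∧
      ∀ (τ : ℝ) (ξ : Fin n → ℝ),
        p τ ξ = MvPolynomial.eval (fun i => Option.elim i ((τ : ℝ) : ℂ) (fun k => ((ξ k : ℝ) : ℂ))) P)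
    (hgal : ∀ (τ : ℝ) (ξ v : Fin n → ℝ),
      p (τ - (∑ k, ξ k * v k) - (lam / 2) * (∑ k, (v k) ^ 2)) (ξ + lam • v) = p τ ξ)
    (hrot : ∀ R ∈ Matrix.orthogonalGroup (Fin n) ℝ, ∀ (τ : ℝ) (ξ : Fin n → ℝ),
      p τ (R.mulVec ξ) = p τ ξ) :
    Even m ∧ ∃ c : ℕ → ℂ, ∀ (τ : ℝ) (ξ : Fin n → ℝ),
      p τ ξ = ∑ k ∈ Finset.range (m / 2 + 1),
        c k * (((2 * lam * τ + ∑ j, (ξ j) ^ 2 : ℝ)) : ℂ) ^ k := by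
  classical
  obtain ⟨P, hdeg, hP⟩ := hpoly
  have h2l : (2 * lam : ℝ) ≠ 0 := mul_ne_zero two_ne_zero hlam
  have hc0c : ((2 * lam : ℝ) : ℂ) ≠ 0 := by exact_mod_cast h2l
  set c0 : ℂ := ((2 * lam : ℝ) : ℂ)⁻¹ with hc0def
  have hc0ne : c0 ≠ 0 := inv_ne_zero hc0c
  -- Step 1: Galilei reduction to ξ = 0
  have key : ∀ (τ : ℝ) (ξ : Fin n → ℝ),
      p τ ξ = p (τ + (∑ k, (ξ k) ^ 2) / (2 * lam)) 0 := by
    intro τ ξ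
    have h := hgal τ ξ ((-(1 / lam)) • ξ)
    have hv : ξ + lam • ((-(1 / lam)) • ξ) = 0 := by
      funext k
      simp only [Pi.add_apply, Pi.smul_apply, smul_eq_mul, Pi.zero_apply]
      field_simp
      ring
    have e1 : (∑ k, ξ k * ((-(1 / lam)) • ξ) k) = -(1 / lam) * ∑ k, (ξ k) ^ 2 := by
      rw [Finset.mul_sum]
      exact Finset.sum_congr rfl (fun k _ => by simp [smul_eq_mul]; ring)
    have e2 : (∑ k, (((-(1 / lam)) • ξ) k) ^ 2) = (1 / lam) ^ 2 * ∑ k, (ξ k) ^ 2 := by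
      rw [Finset.mul_sum]
      exact Finset.sum_congr rfl (fun k _ => by simp [smul_eq_mul]; ring)
    rw [e1, e2, hv] at h
    rw [← h]
    congr 1
    field_simp
    ring
  -- Step 2: the one-variable polynomial Q obtained by setting ξ = 0
  set g : Option (Fin n) → Polynomial ℂ :=
    fun i => Option.elim i Polynomial.X (fun _ => 0) with hgdef
  set Q : Polynomial ℂ := MvPolynomial.aeval g P with hQdef
  have hQeval : ∀ s : ℝ, p s 0 = Polynomial.eval ((s : ℝ) : ℂ) Q := by
    intro s
    have comp := congrFun (congrArg DFunLike.coe
      (MvPolynomial.comp_aeval g (Polynomial.aeval ((s : ℝ) : ℂ) : Polynomial ℂ →ₐ[ℂ] ℂ))) P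
    simp only [AlgHom.comp_apply] at comp
    rw [hP s 0]
    have : (fun i : Option (Fin n) => (Polynomial.aeval ((s : ℝ) : ℂ)) (g i))
        = fun i => Option.elim i ((s : ℝ) : ℂ) (fun k => (((0 : Fin n → ℝ) k : ℝ) : ℂ)) := by
      funext i
      cases i <;> simp [hgdef]
    rw [this] at comp
    exact comp.symm
  -- Step 3: P equals Q composed with the invariant 2λτ+|ξ|² (divided by 2λ)
  set Sv : MvPolynomial (Option (Fin n)) ℂ :=
    MvPolynomial.X none + MvPolynomial.C c0 * ∑ j, (MvPolynomial.X (some j)) ^ 2 with hSvdef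
  set R : MvPolynomial (Option (Fin n)) ℂ := Polynomial.aeval Sv Q with hRdef
  have hPR : P = R := by
    have hz : ∀ x : Option (Fin n) → ℝ,
        MvPolynomial.eval (fun s => (x s : ℂ)) (P - R) = 0 := by
      intro x
      set τ := x none with hτdef
      set ξ : Fin n → ℝ := fun k => x (some k) with hξdef
      have hx : (fun s : Option (Fin n) => (x s : ℂ))
          = fun i => Option.elim i ((τ : ℝ) : ℂ) (fun k => ((ξ k : ℝ) : ℂ)) := by
        funext i; cases i <;> rfl
      rw [map_sub, hx, ← hP τ ξ]
      have comp := Polynomial.aeval_algHom_apply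
        (MvPolynomial.aeval (fun i => Option.elim i ((τ : ℝ) : ℂ) (fun k => ((ξ k : ℝ) : ℂ))) :
          MvPolynomial (Option (Fin n)) ℂ →ₐ[ℂ] ℂ) Sv Q
      have hSv : MvPolynomial.aeval
          (fun i => Option.elim i ((τ : ℝ) : ℂ) (fun k => ((ξ k : ℝ) : ℂ))) Sv
          = ((τ + (∑ k, (ξ k) ^ 2) / (2 * lam) : ℝ) : ℂ) := by
        have e : MvPolynomial.aeval
            (fun i => Option.elim i ((τ : ℝ) : ℂ) (fun k => ((ξ k : ℝ) : ℂ))) Sv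
            = ((τ : ℝ) : ℂ) + ((2 * lam : ℝ) : ℂ)⁻¹ * ∑ j, ((ξ j : ℝ) : ℂ) ^ 2 := by
          rw [hSvdef]
          simp [hc0def]
        rw [e]
        push_cast
        field_simp
      have hR2 : MvPolynomial.eval
          (fun i => Option.elim i ((τ : ℝ) : ℂ) (fun k => ((ξ k : ℝ) : ℂ))) R
          = Polynomial.eval (((τ + (∑ k, (ξ k) ^ 2) / (2 * lam) : ℝ)) : ℂ) Q := by
        have : MvPolynomial.eval
            (fun i => Option.elim i ((τ : ℝ) : ℂ) (fun k => ((ξ k : ℝ) : ℂ))) R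
            = Polynomial.aeval (MvPolynomial.aeval
              (fun i => Option.elim i ((τ : ℝ) : ℂ) (fun k => ((ξ k : ℝ) : ℂ))) Sv) Q :=
          comp.symm
        rw [this, hSv]
        rfl
      rw [hR2, key τ ξ, hQeval]
      ring
    have h0 := mv_eval_real_zero (P - R) hz
    exact sub_eq_zero.mp h0
  -- Step 4: degree computations
  set d : ℕ := Q.natDegree with hddef
  have hSvdeg : Sv.totalDegree ≤ 2 := by
    rw [hSvdef]
    refine le_trans (MvPolynomial.totalDegree_add _ _) (max_le ?_ ?_)
    · simp [MvPolynomial.totalDegree_X]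
    · refine le_trans (MvPolynomial.totalDegree_mul _ _) ?_
      simp only [MvPolynomial.totalDegree_C, zero_add]
      refine le_trans (MvPolynomial.totalDegree_finset_sum _ _) ?_
      apply Finset.sup_le
      intro j _
      refine le_trans (MvPolynomial.totalDegree_pow _ _) ?_
      simp [MvPolynomial.totalDegree_X]
  have hm_le : m ≤ 2 * d := by
    rw [← hdeg, hPR, hRdef, Polynomial.aeval_eq_sum_range]
    refine le_trans (MvPolynomial.totalDegree_finset_sum _ _) ?_
    apply Finset.sup_le
    intro i hi
    refine le_trans (MvPolynomial.totalDegree_smul_le _ _) ?_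
    refine le_trans (MvPolynomial.totalDegree_pow _ _) ?_
    have hi' : i ≤ d := Nat.lt_succ_iff.mp (Finset.mem_range.mp hi)
    calc i * Sv.totalDegree ≤ i * 2 := Nat.mul_le_mul_left _ hSvdeg
      _ ≤ d * 2 := Nat.mul_le_mul_right _ hi'
      _ = 2 * d := Nat.mul_comm _ _
  -- the line restriction
  have npos : 0 < n := by omega
  set j0 : Fin n := ⟨0, npos⟩ with hj0def
  set gl : Option (Fin n) → Polynomial ℂ :=
    fun i => Option.elim i 0 (fun j => if j = j0 then Polynomial.X else 0) with hgldef
  set L : MvPolynomial (Option (Fin n)) ℂ →ₐ[ℂ] Polynomial ℂ :=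
    MvPolynomial.aeval gl with hLdef
  have hgl1 : ∀ i, (gl i).natDegree ≤ 1 := by
    intro i
    cases i with
    | none => simp [hgldef]
    | some j =>
      simp only [hgldef, Option.elim]
      split_ifs <;> simp
  have hLPdeg : (L P).natDegree ≤ m := by
    rw [← hdeg, hLdef, MvPolynomial.aeval_def, MvPolynomial.eval₂_eq]
    refine Polynomial.natDegree_sum_le_of_forall_le _ _ ?_
    intro α hα
    refine le_trans (Polynomial.natDegree_mul_le) ?_
    have h1 : ((algebraMap ℂ (Polynomial ℂ)) (MvPolynomial.coeff α P)).natDegree = 0 :=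
      Polynomial.natDegree_C _
    rw [h1, zero_add]
    refine le_trans (Polynomial.natDegree_prod_le _ _) ?_
    refine le_trans ?_ (MvPolynomial.le_totalDegree hα)
    rw [Finsupp.sum]
    apply Finset.sum_le_sum
    intro i _
    refine le_trans (Polynomial.natDegree_pow_le) ?_
    calc α i * (gl i).natDegree ≤ α i * 1 := Nat.mul_le_mul_left _ (hgl1 i)
      _ = α i := Nat.mul_one _
  have hLSv : L Sv = Polynomial.C c0 * Polynomial.X ^ 2 := by
    rw [hSvdef]
    have hsq : ∀ j : Fin n, ((if j = j0 then (Polynomial.X : Polynomial ℂ) else 0) ^ 2)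
        = if j = j0 then Polynomial.X ^ 2 else 0 := by
      intro j; split_ifs <;> simp
    simp only [hLdef, map_add, map_mul, map_sum, map_pow, MvPolynomial.aeval_X,
      MvPolynomial.aeval_C, hgldef, Option.elim, hsq]
    rw [Finset.sum_ite_eq' Finset.univ j0]
    simp [Polynomial.algebraMap_eq]
  have hcomp : L P = Q.comp (Polynomial.C c0 * Polynomial.X ^ 2) := by
    rw [hPR, hRdef]
    have := Polynomial.aeval_algHom_apply L Sv Q
    rw [← this, hLSv]
    simp [Polynomial.comp, Polynomial.aeval_def, Polynomial.algebraMap_eq]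
  have h2d_le : 2 * d ≤ m := by
    have : (L P).natDegree = 2 * d := by
      rw [hcomp, Polynomial.natDegree_comp, Polynomial.natDegree_C_mul_X_pow 2 c0 hc0ne,
        Nat.mul_comm]
    omega
  have hm2d : m = 2 * d := le_antisymm hm_le h2d_le
  -- Step 5: conclusion
  refine ⟨⟨d, by omega⟩, fun k => Q.coeff k * c0 ^ k, ?_⟩
  intro τ ξ
  have hz : ((τ + (∑ k, (ξ k) ^ 2) / (2 * lam) : ℝ) : ℂ)
      = c0 * ((2 * lam * τ + ∑ j, (ξ j) ^ 2 : ℝ) : ℂ) := by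
    have hlamc : (lam : ℂ) ≠ 0 := by exact_mod_cast hlam
    rw [hc0def]
    push_cast
    field_simp
  rw [key τ ξ, hQeval, Polynomial.eval_eq_sum_range, hz]
  have hrange : Q.natDegree + 1 = m / 2 + 1 := by omega
  rw [hrange]
  refine Finset.sum_congr rfl ?_
  intro k _
  rw [mul_pow]
  ring
end

section
/- Suppose a second-order operator L = Σ_{j+|α|≤2} a_{jα} ∂_t^j ∂^α with complex constants a_{jα} (and Σ_{j+|α|=2}|a_{jα}| ≠ 0) commutes with all rotation pull-backs (1⊗R)^* for R ∈ O(n), n ≥ 2, and for each v ∈ ℝⁿ admits a smooth real θ_v with L(e^{iθ_v}G_v^*u) = e^{iθ_v}G_v^*(Lu) for all smooth u. Then L = α(2iλ∂_t + Δ) + β for some α ∈ ℂ \ {0}, λ ∈ ℝ, β ∈ ℂ; in particular all mixed and first-order spatial terms vanish, a_{2,0} = 0, the pure second-order spatial coefficients are all equal, and ia_{1,0}/α is real. -/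
open Complex

namespace Tool
variable {n : ℕ}

lemma hasDerivAt_tpath (x : Fin n → ℝ) (t : ℝ) :
    HasDerivAt (fun s : ℝ => ((s, x) : ℝ × (Fin n → ℝ))) (1, 0) t :=
  (hasDerivAt_id t).prodMk (hasDerivAt_const t x)

lemma update_eq_affine (x : Fin n → ℝ) (k : Fin n) (s : ℝ) :
    Function.update x k s = x + (s - x k) • (Pi.single k 1 : Fin n → ℝ) := by
  funext j
  by_cases h : j = k
  · subst h; simp
  · simp [Function.update_apply, h, Pi.single_apply]

lemma hasDerivAt_xpath (t : ℝ) (x : Fin n → ℝ) (k : Fin n) (s₀ : ℝ) :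
    HasDerivAt (fun s : ℝ => ((t, Function.update x k s) : ℝ × (Fin n → ℝ)))
      (0, (Pi.single k 1 : Fin n → ℝ)) s₀ := by
  apply (hasDerivAt_const s₀ t).prodMk
  rw [show (Function.update x k : ℝ → (Fin n → ℝ))
      = fun s => x + (s - x k) • (Pi.single k 1 : Fin n → ℝ) from
    funext (update_eq_affine x k)]
  simpa using (((hasDerivAt_id s₀).sub_const (x k)).smul_const
    ((Pi.single k 1 : Fin n → ℝ))).const_add x

variable {u f g : ℝ → (Fin n → ℝ) → ℂ}

lemma smooth_diffAt (hu : SmoothFn u) (p : ℝ × (Fin n → ℝ)) :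
    DifferentiableAt ℝ (fun p : ℝ × (Fin n → ℝ) => u p.1 p.2) p :=
  (hu.differentiable (by simp)).differentiableAt

lemma pt_eq_fderiv (hu : SmoothFn u) (t : ℝ) (x : Fin n → ℝ) :
    pt u t x = fderiv ℝ (fun p : ℝ × (Fin n → ℝ) => u p.1 p.2) (t, x) (1, 0) := by
  have h := ((smooth_diffAt hu (t, x)).hasFDerivAt.comp_hasDerivAt t (hasDerivAt_tpath x t))
  exact h.deriv

lemma px_eq_fderiv (hu : SmoothFn u) (k : Fin n) (t : ℝ) (x : Fin n → ℝ) :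
    px k u t x
      = fderiv ℝ (fun p : ℝ × (Fin n → ℝ) => u p.1 p.2) (t, x) (0, Pi.single k 1) := by
  have h := ((smooth_diffAt hu (t, Function.update x k (x k))).hasFDerivAt.comp_hasDerivAt
    (x k) (hasDerivAt_xpath t x k (x k)))
  rw [Function.update_eq_self] at h
  exact h.deriv

lemma smooth_pd (hu : SmoothFn u) (d : ℝ × (Fin n → ℝ)) :
    ContDiff ℝ (⊤ : ℕ∞) (fun p : ℝ × (Fin n → ℝ) =>
      fderiv ℝ (fun q : ℝ × (Fin n → ℝ) => u q.1 q.2) p d) :=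
  (ContinuousLinearMap.apply ℝ ℂ d).contDiff.comp (hu.fderiv_right (by simp))

lemma smooth_pt (hu : SmoothFn u) : SmoothFn (pt u) := by
  have : (fun p : ℝ × (Fin n → ℝ) => pt u p.1 p.2)
      = fun p => fderiv ℝ (fun q : ℝ × (Fin n → ℝ) => u q.1 q.2) p (1, 0) := by
    funext p; exact pt_eq_fderiv hu p.1 p.2
  unfold SmoothFn; rw [this]; exact smooth_pd hu _

lemma smooth_px (hu : SmoothFn u) (k : Fin n) : SmoothFn (px k u) := by
  have : (fun p : ℝ × (Fin n → ℝ) => px k u p.1 p.2)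
      = fun p => fderiv ℝ (fun q : ℝ × (Fin n → ℝ) => u q.1 q.2) p (0, Pi.single k 1) := by
    funext p; exact px_eq_fderiv hu k p.1 p.2
  unfold SmoothFn; rw [this]; exact smooth_pd hu _

lemma smooth_mul (hf : SmoothFn f) (hg : SmoothFn g) :
    SmoothFn (fun t x => f t x * g t x) := ContDiff.mul hf hg

lemma smooth_add (hf : SmoothFn f) (hg : SmoothFn g) :
    SmoothFn (fun t x => f t x + g t x) := ContDiff.add hf hg

lemma diff_slice_t (hu : SmoothFn u) (t : ℝ) (x : Fin n → ℝ) :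
    DifferentiableAt ℝ (fun s => u s x) t :=
  by have h := ((smooth_diffAt hu (t, x)).hasFDerivAt.comp_hasDerivAt t (hasDerivAt_tpath x t)); exact h.differentiableAt

lemma diff_slice_x (hu : SmoothFn u) (t : ℝ) (x : Fin n → ℝ) (k : Fin n) (s₀ : ℝ) :
    DifferentiableAt ℝ (fun s => u t (Function.update x k s)) s₀ :=
  by have h := ((smooth_diffAt hu (t, Function.update x k s₀)).hasFDerivAt.comp_hasDerivAt s₀
    (hasDerivAt_xpath t x k s₀)); exact h.differentiableAt

lemma pt_mul (hf : SmoothFn f) (hg : SmoothFn g) (t : ℝ) (x : Fin n → ℝ) :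
    pt (fun t x => f t x * g t x) t x = pt f t x * g t x + f t x * pt g t x := by
  unfold pt
  exact deriv_mul (diff_slice_t hf t x) (diff_slice_t hg t x)

lemma px_mul (hf : SmoothFn f) (hg : SmoothFn g) (k : Fin n) (t : ℝ) (x : Fin n → ℝ) :
    px k (fun t x => f t x * g t x) t x = px k f t x * g t x + f t x * px k g t x := by
  unfold px
  rw [deriv_fun_mul (diff_slice_x hf t x k (x k)) (diff_slice_x hg t x k (x k))]
  rw [Function.update_eq_self]

lemma pt_add (hf : SmoothFn f) (hg : SmoothFn g) (t : ℝ) (x : Fin n → ℝ) :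
    pt (fun t x => f t x + g t x) t x = pt f t x + pt g t x := by
  unfold pt
  exact deriv_add (diff_slice_t hf t x) (diff_slice_t hg t x)

lemma px_add (hf : SmoothFn f) (hg : SmoothFn g) (k : Fin n) (t : ℝ) (x : Fin n → ℝ) :
    px k (fun t x => f t x + g t x) t x = px k f t x + px k g t x := by
  unfold px
  exact deriv_add (diff_slice_x hf t x k (x k)) (diff_slice_x hg t x k (x k))


section Bsec
noncomputable def quadF (b q e : ℂ) (pv sv : Fin n → ℂ) (M : Fin n → Fin n → ℂ) :
    ℝ → (Fin n → ℝ) → ℂ :=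
  fun t x => b + q*(t:ℂ) + e*((t:ℂ)*(t:ℂ)) + (∑ i, pv i * (x i:ℂ))
    + (t:ℂ)*(∑ i, sv i * (x i:ℂ)) + ∑ i, ∑ j, M i j * (x i:ℂ) * (x j:ℂ)

variable {b q e : ℂ} {pv sv : Fin n → ℂ} {M : Fin n → Fin n → ℂ}

lemma quad_val0 : quadF b q e pv sv M 0 0 = b := by
  simp [quadF]

lemma smooth_quad : SmoothFn (quadF b q e pv sv M) := by
  have c1 : ContDiff ℝ (⊤ : ℕ∞) (fun p : ℝ × (Fin n → ℝ) => ((p.1 : ℝ) : ℂ)) :=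
    Complex.ofRealCLM.contDiff.comp contDiff_fst
  have c2 : ∀ i, ContDiff ℝ (⊤ : ℕ∞) (fun p : ℝ × (Fin n → ℝ) => ((p.2 i : ℝ) : ℂ)) := fun i =>
    Complex.ofRealCLM.contDiff.comp (contDiff_pi.1 contDiff_snd i)
  unfold SmoothFn quadF
  apply ContDiff.add
  apply ContDiff.add
  apply ContDiff.add
  apply ContDiff.add
  apply ContDiff.add
  · exact contDiff_const
  · exact c1.const_smul q
  · exact ((c1.mul c1)).const_smul e
  · exact ContDiff.sum fun i _ => (c2 i).const_smul (pv i)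
  · exact c1.mul (ContDiff.sum fun i _ => (c2 i).const_smul (sv i))
  · exact ContDiff.sum fun i _ => ContDiff.sum fun j _ => ((c2 i).const_smul (M i j)).mul (c2 j)

lemma hasDerivAt_coe (t : ℝ) : HasDerivAt (fun s : ℝ => (s : ℂ)) 1 t := by
  simpa using (hasDerivAt_id t).ofReal_comp

lemma quad_pt : pt (quadF b q e pv sv M) = quadF q (2*e) 0 sv 0 0 := by
  funext t x
  have h1 := hasDerivAt_coe t
  have H : HasDerivAt (fun s : ℝ => b + q*(s:ℂ) + e*((s:ℂ)*(s:ℂ)) + (∑ i, pv i * (x i:ℂ))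
      + (s:ℂ)*(∑ i, sv i * (x i:ℂ)) + ∑ i, ∑ j, M i j * (x i:ℂ) * (x j:ℂ))
      (0 + q*1 + e*(1*(t:ℂ)+(t:ℂ)*1) + 0 + (1*(∑ i, sv i * (x i:ℂ)) + (t:ℂ)*0) + 0) t :=
    ((((((hasDerivAt_const t b).add (h1.const_mul q)).add
      ((h1.mul h1).const_mul e)).add (hasDerivAt_const t _)).add
      (h1.mul (hasDerivAt_const t _))).add (hasDerivAt_const t _))
  show deriv (fun s => quadF b q e pv sv M s x) t = _
  rw [show (fun s => quadF b q e pv sv M s x)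
      = (fun s : ℝ => b + q*(s:ℂ) + e*((s:ℂ)*(s:ℂ)) + (∑ i, pv i * (x i:ℂ))
      + (s:ℂ)*(∑ i, sv i * (x i:ℂ)) + ∑ i, ∑ j, M i j * (x i:ℂ) * (x j:ℂ)) from rfl, H.deriv]
  simp only [quadF, Pi.zero_apply, zero_mul, mul_zero, mul_one, one_mul, add_zero, zero_add,
    Finset.sum_const_zero]
  ring

lemma quad_px (k : Fin n) :
    px k (quadF b q e pv sv M) = quadF (pv k) (sv k) 0 (fun j => M k j + M j k) 0 0 := by
  funext t x
  have hφ : ∀ i, HasDerivAt (fun s => ((Function.update x k s i : ℝ) : ℂ))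
      (if i = k then 1 else 0) (x k) := by
    intro i
    by_cases h : i = k
    · rw [h]
      simp only [Function.update_self, if_pos rfl]
      exact hasDerivAt_coe (x k)
    · simp only [Function.update_apply, if_neg h]
      exact hasDerivAt_const _ _
  have H : HasDerivAt (fun s : ℝ => b + q*(t:ℂ) + e*((t:ℂ)*(t:ℂ))
      + (∑ i, pv i * ((Function.update x k s i : ℝ):ℂ))
      + (t:ℂ)*(∑ i, sv i * ((Function.update x k s i : ℝ):ℂ))
      + ∑ i, ∑ j, M i j * ((Function.update x k s i : ℝ):ℂ) * ((Function.update x k s j : ℝ):ℂ))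
      (0 + 0 + 0 + (∑ i, pv i * (if i = k then 1 else 0))
      + ((t:ℂ)*(∑ i, sv i * (if i = k then 1 else 0)))
      + ∑ i, ∑ j, ((M i j * (if i = k then 1 else 0)) * ((Function.update x k (x k) j : ℝ):ℂ)
          + (M i j * ((Function.update x k (x k) i : ℝ):ℂ)) * (if j = k then 1 else 0))) (x k) :=
    (((((hasDerivAt_const _ b).add (hasDerivAt_const _ (q*(t:ℂ)))).add
      (hasDerivAt_const _ (e*((t:ℂ)*(t:ℂ))))).add
      (HasDerivAt.fun_sum fun i _ => (hφ i).const_mul (pv i))).add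
      ((HasDerivAt.fun_sum fun i _ => (hφ i).const_mul (sv i)).const_mul (t:ℂ))).add
      (HasDerivAt.fun_sum fun i _ => HasDerivAt.fun_sum fun j _ => ((hφ i).const_mul (M i j)).mul (hφ j))
  show deriv (fun s => quadF b q e pv sv M t (Function.update x k s)) (x k) = _
  rw [show (fun s => quadF b q e pv sv M t (Function.update x k s))
      = (fun s : ℝ => b + q*(t:ℂ) + e*((t:ℂ)*(t:ℂ))
      + (∑ i, pv i * ((Function.update x k s i : ℝ):ℂ))
      + (t:ℂ)*(∑ i, sv i * ((Function.update x k s i : ℝ):ℂ))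
      + ∑ i, ∑ j, M i j * ((Function.update x k s i : ℝ):ℂ) * ((Function.update x k s j : ℝ):ℂ))
      from rfl, H.deriv]
  simp only [Function.update_eq_self]
  simp only [quadF, mul_ite, ite_mul, mul_one, mul_zero, one_mul, zero_mul,
    Finset.sum_ite_irrel, Finset.sum_ite_eq', Finset.mem_univ, if_true, Finset.sum_const_zero,
    Pi.zero_apply, Finset.sum_add_distrib, add_mul, zero_add, add_zero]
  ring

end Bsec

section Csec
variable {α : Fin n → ℕ} {u : ℝ → (Fin n → ℝ) → ℂ}
lemma foldr_zero (L : List (Fin n)) (h : ∀ j ∈ L, α j = 0) :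
    L.foldr (fun k f => (px k)^[α k] ∘ f) id = id := by
  induction L with
  | nil => rfl
  | cons j tl ih =>
    rw [List.foldr_cons, ih (fun m hm => h m (List.mem_cons_of_mem _ hm)),
      h j (List.mem_cons_self (a := j) (l := tl))]
    simp

lemma foldr_single (L : List (Fin n)) (k : Fin n) (hnd : L.Nodup) (hk : k ∈ L)
    (h : ∀ j ∈ L, j ≠ k → α j = 0) :
    L.foldr (fun k f => (px k)^[α k] ∘ f) id = (px k)^[α k] := by
  induction L with
  | nil => cases hk
  | cons j tl ih =>
    rw [List.foldr_cons]
    rcases List.mem_cons.mp hk with rfl | hk'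
    · have hz : ∀ m ∈ tl, α m = 0 := by
        intro m hm
        refine h m (List.mem_cons_of_mem _ hm) ?_
        rintro rfl; exact (List.nodup_cons.mp hnd).1 hm
      rw [foldr_zero tl hz]
      simp
    · have hj : α j = 0 := h j (List.mem_cons_self (a := j) (l := tl))
        (by rintro rfl; exact (List.nodup_cons.mp hnd).1 hk')
      rw [hj]
      simp only [Function.iterate_zero, Function.id_comp]
      exact ih (List.nodup_cons.mp hnd).2 hk'
        (fun m hm hmk => h m (List.mem_cons_of_mem _ hm) hmk)

lemma foldr_pair (L : List (Fin n)) (k l : Fin n) (hkl : k ≠ l) (hnd : L.Nodup)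
    (hk : k ∈ L) (hl : l ∈ L) (h : ∀ j ∈ L, j ≠ k → j ≠ l → α j = 0) :
    L.foldr (fun k f => (px k)^[α k] ∘ f) id = (px k)^[α k] ∘ (px l)^[α l]
    ∨ L.foldr (fun k f => (px k)^[α k] ∘ f) id = (px l)^[α l] ∘ (px k)^[α k] := by
  induction L with
  | nil => cases hk
  | cons j tl ih =>
    rcases List.mem_cons.mp hk with rfl | hk'
    · left
      have hl' : l ∈ tl := by
        rcases List.mem_cons.mp hl with h' | h'
        · exact absurd h'.symm hkl
        · exact h'
      rw [List.foldr_cons, foldr_single tl l (List.nodup_cons.mp hnd).2 hl'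
        (fun m hm hml => h m (List.mem_cons_of_mem _ hm)
          (by rintro rfl; exact (List.nodup_cons.mp hnd).1 hm) hml)]
    · rcases List.mem_cons.mp hl with rfl | hl'
      · right
        have hk'' : k ∈ tl := hk'
        rw [List.foldr_cons, foldr_single tl k (List.nodup_cons.mp hnd).2 hk''
          (fun m hm hmk => h m (List.mem_cons_of_mem _ hm) hmk
            (by rintro rfl; exact (List.nodup_cons.mp hnd).1 hm))]
      · have hj : α j = 0 := h j (List.mem_cons_self (a := j) (l := tl))
          (by rintro rfl; exact (List.nodup_cons.mp hnd).1 hk')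
          (by rintro rfl; exact (List.nodup_cons.mp hnd).1 hl')
        rw [List.foldr_cons, hj]
        simp only [Function.iterate_zero, Function.id_comp]
        exact ih (List.nodup_cons.mp hnd).2 hk' hl'
          (fun m hm hmk hml => h m (List.mem_cons_of_mem _ hm) hmk hml)

lemma mderiv_of_zero (hα : ∀ j, α j = 0) : mderiv α u = u := by
  unfold mderiv
  rw [foldr_zero _ (fun j _ => hα j)]
  rfl

lemma mderiv_of_single (k : Fin n) (hα : ∀ j, j ≠ k → α j = 0) :
    mderiv α u = (px k)^[α k] u := by
  unfold mderiv
  rw [foldr_single _ k (List.nodup_finRange n) (List.mem_finRange k)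
    (fun j _ hj => hα j hj)]

lemma mderiv_of_pair (k l : Fin n) (hkl : k ≠ l) (hα : ∀ j, j ≠ k → j ≠ l → α j = 0) :
    mderiv α u = (px k)^[α k] ((px l)^[α l] u)
    ∨ mderiv α u = (px l)^[α l] ((px k)^[α k] u) := by
  unfold mderiv
  rcases foldr_pair (List.finRange n) k l hkl (List.nodup_finRange n)
    (List.mem_finRange k) (List.mem_finRange l) (fun j _ hjk hjl => hα j hjk hjl) with h | h
  · left; rw [h]; rfl
  · right; rw [h]; rfl

lemma mem_idxSet_iff {p : ℕ × (Fin n → ℕ)} : p ∈ idxSet n 2 ↔ p.1 + ∑ k, p.2 k ≤ 2 := by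
  unfold idxSet
  rw [Finset.mem_filter]
  constructor
  · exact fun h => h.2
  · intro h
    refine ⟨Finset.mem_product.mpr ⟨?_, ?_⟩, h⟩
    · exact Finset.mem_range.mpr (by omega)
    · refine Fintype.mem_piFinset.mpr fun k => Finset.mem_range.mpr ?_
      have : p.2 k ≤ ∑ j, p.2 j := Finset.single_le_sum (fun j _ => Nat.zero_le _) (Finset.mem_univ k)
      omega

lemma classify_alpha (α : Fin n → ℕ) (h : ∑ k, α k ≤ 2) :
    (α = fun _ => 0) ∨ (∃ k, α = fun j => if j = k then 1 else 0)
    ∨ (∃ k, α = fun j => if j = k then 2 else 0)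
    ∨ (∃ k l, k ≠ l ∧ α = fun j => if j = k then 1 else if j = l then 1 else 0) := by
  by_cases hz : ∀ j, α j = 0
  · exact Or.inl (funext hz)
  push_neg at hz
  obtain ⟨k, hk⟩ := hz
  have hkle : α k ≤ 2 :=
    le_trans (Finset.single_le_sum (fun j _ => Nat.zero_le _) (Finset.mem_univ k)) h
  by_cases hz2 : ∀ j, j ≠ k → α j = 0
  · have : α k = 1 ∨ α k = 2 := by omega
    rcases this with h1 | h2
    · refine Or.inr (Or.inl ⟨k, funext fun j => ?_⟩)
      by_cases hj : j = k
      · subst hj; simp [h1]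
      · simp [hj, hz2 j hj]
    · refine Or.inr (Or.inr (Or.inl ⟨k, funext fun j => ?_⟩))
      by_cases hj : j = k
      · subst hj; simp [h2]
      · simp [hj, hz2 j hj]
  · push_neg at hz2
    obtain ⟨l, hlk, hl⟩ := hz2
    have hkl : k ≠ l := fun h' => hlk h'.symm
    have hpair : α k + α l ≤ 2 := by
      have h2 := Finset.sum_le_sum_of_subset (f := α) (Finset.subset_univ ({k, l} : Finset (Fin n)))
      rw [Finset.sum_pair hkl] at h2
      omega
    have hothers : ∀ m, m ≠ k → m ≠ l → α m = 0 := by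
      intro m hmk hml
      by_contra hm
      have hkm : k ≠ m := fun h' => hmk h'.symm
      have hlm : l ≠ m := fun h' => hml h'.symm
      have hs1 := Finset.sum_le_sum_of_subset (f := α)
        (Finset.subset_univ ({k, l, m} : Finset (Fin n)))
      rw [Finset.sum_insert (by simp [hkl, hkm]), Finset.sum_insert (by simp [hlm]),
        Finset.sum_singleton] at hs1
      omega
    refine Or.inr (Or.inr (Or.inr ⟨k, l, hkl, funext fun j => ?_⟩))
    by_cases hjk : j = k
    · subst hjk; simp; omega
    · by_cases hjl : j = l
      · subst hjl; simp [Ne.symm hkl, hjk]; omega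
      · simp [hjk, hjl, hothers j hjk hjl]

lemma sum_cancel₁ {ι : Type*} (S : Finset ι) (g₁ g₂ : ι → ℂ)
    (h : ∑ p ∈ S, g₁ p = ∑ p ∈ S, g₂ p) {p₀ : ι} (hp₀ : p₀ ∈ S)
    (hoth : ∀ p ∈ S, p ≠ p₀ → g₁ p = g₂ p) : g₁ p₀ = g₂ p₀ := by
  have hz : ∑ p ∈ S, (g₁ p - g₂ p) = 0 := by
    rw [Finset.sum_sub_distrib, h, sub_self]
  have h2 := Finset.sum_eq_single_of_mem p₀ hp₀
    (f := fun p => g₁ p - g₂ p) (fun b hb hbne => by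
      show g₁ b - g₂ b = 0
      rw [hoth b hb hbne, sub_self])
  rw [h2] at hz
  exact sub_eq_zero.mp hz

lemma sum_cancel₂ {ι : Type*} [DecidableEq ι] (S : Finset ι) (g₁ g₂ : ι → ℂ)
    (h : ∑ p ∈ S, g₁ p = ∑ p ∈ S, g₂ p) {p₀ p₁ : ι} (hp₀ : p₀ ∈ S) (hp₁ : p₁ ∈ S)
    (hne : p₀ ≠ p₁)
    (hoth : ∀ p ∈ S, p ≠ p₀ → p ≠ p₁ → g₁ p = g₂ p) :
    (g₁ p₀ - g₂ p₀) + (g₁ p₁ - g₂ p₁) = 0 := by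
  have hz : ∑ p ∈ S, (g₁ p - g₂ p) = 0 := by
    rw [Finset.sum_sub_distrib, h, sub_self]
  have hsub : ({p₀, p₁} : Finset ι) ⊆ S := by
    intro x hx
    rcases Finset.mem_insert.mp hx with rfl | hx
    · exact hp₀
    · rw [Finset.mem_singleton.mp hx]; exact hp₁
  rw [← Finset.sum_subset hsub (fun x hxS hxn => by
    rw [hoth x hxS (by rintro rfl; exact hxn (Finset.mem_insert_self _ _))
      (by rintro rfl; exact hxn (Finset.mem_insert.mpr (Or.inr (Finset.mem_singleton_self _)))), sub_self])] at hz
  rw [Finset.sum_pair hne] at hz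
  exact hz


end Csec

section Dsec
variable {b q e : ℂ} {pv sv : Fin n → ℂ} {M : Fin n → Fin n → ℂ}
variable {u f g E : ℝ → (Fin n → ℝ) → ℂ}
lemma sum_single_eq (k : Fin n) : (∑ i, (if i = k then 1 else 0)) = 1 := by
  simp [Finset.sum_ite_eq']

lemma sum_two_eq (k : Fin n) : (∑ i, (if i = k then 2 else 0)) = 2 := by
  simp [Finset.sum_ite_eq']

lemma sum_pairfn_eq {k l : Fin n} (hkl : k ≠ l) :
    (∑ i, (if i = k then 1 else if i = l then 1 else 0)) = 2 := by
  have h : ∀ i, (if i = k then 1 else if i = l then 1 else 0)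
      = (if i = k then 1 else 0) + (if i = l then 1 else 0) := by
    intro i
    by_cases h1 : i = k
    · subst h1; simp [hkl]
    · by_cases h2 : i = l <;> simp [h1, h2, Ne.symm hkl]
  rw [Finset.sum_congr rfl (fun i _ => h i), Finset.sum_add_distrib,
    sum_single_eq, sum_single_eq]

/-- Master evaluation of operator terms on a quadratic test function at the origin. -/
lemma Dquad (b q e : ℂ) (pv sv : Fin n → ℂ) (M : Fin n → Fin n → ℂ)
    (j : ℕ) (α : Fin n → ℕ) (h : j + ∑ k, α k ≤ 2) :
    (j = 0 ∧ α = (fun _ => 0) ∧ (pt^[j] (mderiv α (quadF b q e pv sv M))) 0 0 = b)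
  ∨ (j = 1 ∧ α = (fun _ => 0) ∧ (pt^[j] (mderiv α (quadF b q e pv sv M))) 0 0 = q)
  ∨ (j = 2 ∧ α = (fun _ => 0) ∧ (pt^[j] (mderiv α (quadF b q e pv sv M))) 0 0 = 2*e)
  ∨ (∃ k, j = 0 ∧ α = (fun i => if i = k then 1 else 0)
      ∧ (pt^[j] (mderiv α (quadF b q e pv sv M))) 0 0 = pv k)
  ∨ (∃ k, j = 1 ∧ α = (fun i => if i = k then 1 else 0)
      ∧ (pt^[j] (mderiv α (quadF b q e pv sv M))) 0 0 = sv k)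
  ∨ (∃ k, j = 0 ∧ α = (fun i => if i = k then 2 else 0)
      ∧ (pt^[j] (mderiv α (quadF b q e pv sv M))) 0 0 = M k k + M k k)
  ∨ (∃ k l, k ≠ l ∧ j = 0 ∧ α = (fun i => if i = k then 1 else if i = l then 1 else 0)
      ∧ (pt^[j] (mderiv α (quadF b q e pv sv M))) 0 0 = M k l + M l k) := by
  have hS : ∑ k, α k ≤ 2 := by omega
  rcases classify_alpha α hS with h0 | ⟨k, h1⟩ | ⟨k, h2⟩ | ⟨k, l, hkl, h3⟩
  · -- α = 0
    have hm : mderiv α (quadF b q e pv sv M) = quadF b q e pv sv M :=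
      mderiv_of_zero (fun i => congrFun h0 i)
    have hj : j ≤ 2 := by omega
    interval_cases j
    · exact Or.inl ⟨rfl, h0, by rw [hm]; simpa using quad_val0⟩
    · refine Or.inr (Or.inl ⟨rfl, h0, ?_⟩)
      rw [hm]
      simp only [Function.iterate_one]
      rw [quad_pt]
      exact quad_val0
    · refine Or.inr (Or.inr (Or.inl ⟨rfl, h0, ?_⟩))
      rw [hm]
      show pt (pt (quadF b q e pv sv M)) 0 0 = 2*e
      rw [quad_pt, quad_pt]
      exact quad_val0
  · -- α = single k
    have hs : ∑ i, α i = 1 := by rw [h1]; exact sum_single_eq k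
    have hαk : α k = 1 := by rw [h1]; simp
    have hm : mderiv α (quadF b q e pv sv M) = px k (quadF b q e pv sv M) := by
      rw [mderiv_of_single k (fun i hi => by rw [h1]; simp [hi]), hαk, Function.iterate_one]
    have hj : j ≤ 1 := by omega
    interval_cases j
    · refine Or.inr (Or.inr (Or.inr (Or.inl ⟨k, rfl, h1, ?_⟩)))
      rw [hm]
      show px k (quadF b q e pv sv M) 0 0 = pv k
      rw [quad_px]
      exact quad_val0
    · refine Or.inr (Or.inr (Or.inr (Or.inr (Or.inl ⟨k, rfl, h1, ?_⟩))))
      rw [hm]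
      simp only [Function.iterate_one]
      rw [quad_px, quad_pt]
      exact quad_val0
  · -- α = 2 e_k
    have hs : ∑ i, α i = 2 := by rw [h2]; exact sum_two_eq k
    have hαk : α k = 2 := by rw [h2]; simp
    have hj : j = 0 := by omega
    subst hj
    refine Or.inr (Or.inr (Or.inr (Or.inr (Or.inr (Or.inl ⟨k, rfl, h2, ?_⟩)))))
    have hm : mderiv α (quadF b q e pv sv M) = px k (px k (quadF b q e pv sv M)) := by
      rw [mderiv_of_single k (fun i hi => by rw [h2]; simp [hi]), hαk]
      rfl
    rw [hm]
    show px k (px k (quadF b q e pv sv M)) 0 0 = M k k + M k k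
    rw [quad_px, quad_px]
    exact quad_val0
  · -- α = e_k + e_l
    have hs : ∑ i, α i = 2 := by rw [h3]; exact sum_pairfn_eq hkl
    have hαk : α k = 1 := by rw [h3]; simp
    have hαl : α l = 1 := by rw [h3]; simp [Ne.symm hkl]
    have hj : j = 0 := by omega
    subst hj
    refine Or.inr (Or.inr (Or.inr (Or.inr (Or.inr (Or.inr ⟨k, l, hkl, rfl, h3, ?_⟩)))))
    rcases mderiv_of_pair (α := α) (u := quadF b q e pv sv M) k l hkl
      (fun i hik hil => by rw [h3]; simp [hik, hil]) with hm | hm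
    · rw [hm, hαk, hαl]
      simp only [Function.iterate_one]
      show px k (px l (quadF b q e pv sv M)) 0 0 = M k l + M l k
      rw [quad_px, quad_px]
      exact quad_val0.trans (add_comm _ _)
    · rw [hm, hαk, hαl]
      simp only [Function.iterate_one]
      show px l (px k (quadF b q e pv sv M)) 0 0 = M k l + M l k
      rw [quad_px, quad_px]
      exact quad_val0

section EQ

lemma EQ_pt_fun (hE : SmoothFn E) (q e : ℂ) (pv sv : Fin n → ℂ) (M : Fin n → Fin n → ℂ) :
    pt (fun t x => E t x * quadF 0 q e pv sv M t x)
      = fun t x => pt E t x * quadF 0 q e pv sv M t x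
        + E t x * quadF q (2*e) 0 sv 0 0 t x := by
  funext t x
  rw [pt_mul hE smooth_quad t x, quad_pt]

lemma EQ_px_fun (hE : SmoothFn E) (k : Fin n) (q e : ℂ) (pv sv : Fin n → ℂ) (M : Fin n → Fin n → ℂ) :
    px k (fun t x => E t x * quadF 0 q e pv sv M t x)
      = fun t x => px k E t x * quadF 0 q e pv sv M t x
        + E t x * quadF (pv k) (sv k) 0 (fun j => M k j + M j k) 0 0 t x := by
  funext t x
  rw [px_mul hE smooth_quad k t x, quad_px]

lemma EQ_val00 : (fun t x => E t x * quadF 0 q e pv sv M t x) 0 0 = 0 := by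
  show E 0 0 * quadF 0 q e pv sv M 0 0 = 0
  rw [quad_val0, mul_zero]

lemma EQ_val10 (hE : SmoothFn E) : pt (fun t x => E t x * quadF 0 q e pv sv M t x) 0 0 = E 0 0 * q := by
  rw [EQ_pt_fun hE]
  show pt E 0 0 * quadF 0 q e pv sv M 0 0 + E 0 0 * quadF q (2*e) 0 sv 0 0 0 0 = E 0 0 * q
  rw [quad_val0, quad_val0, mul_zero, zero_add]

lemma EQ_val20 (hE : SmoothFn E) : pt (pt (fun t x => E t x * quadF 0 q e pv sv M t x)) 0 0
    = 2*(pt E 0 0)*q + E 0 0 * (2*e) := by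
  rw [EQ_pt_fun hE]
  rw [pt_add (smooth_mul (smooth_pt hE) smooth_quad) (smooth_mul hE smooth_quad) 0 0,
    pt_mul (smooth_pt hE) smooth_quad 0 0, pt_mul hE smooth_quad 0 0, quad_pt, quad_pt]
  rw [quad_val0, quad_val0, quad_val0]
  ring

lemma EQ_val0k (hE : SmoothFn E) (k : Fin n) :
    px k (fun t x => E t x * quadF 0 q e pv sv M t x) 0 0 = E 0 0 * pv k := by
  rw [EQ_px_fun hE]
  show px k E 0 0 * quadF 0 q e pv sv M 0 0
    + E 0 0 * quadF (pv k) (sv k) 0 (fun j => M k j + M j k) 0 0 0 0 = E 0 0 * pv k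
  rw [quad_val0, quad_val0, mul_zero, zero_add]

lemma EQ_val1k (hE : SmoothFn E) (k : Fin n) :
    pt (px k (fun t x => E t x * quadF 0 q e pv sv M t x)) 0 0
      = px k E 0 0 * q + pt E 0 0 * pv k + E 0 0 * sv k := by
  rw [EQ_px_fun hE]
  rw [pt_add (smooth_mul (smooth_px hE k) smooth_quad) (smooth_mul hE smooth_quad) 0 0,
    pt_mul (smooth_px hE k) smooth_quad 0 0, pt_mul hE smooth_quad 0 0, quad_pt, quad_pt]
  rw [quad_val0, quad_val0, quad_val0, quad_val0]
  ring

lemma EQ_val2k (hE : SmoothFn E) (k : Fin n) :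
    px k (px k (fun t x => E t x * quadF 0 q e pv sv M t x)) 0 0
      = 2*(px k E 0 0)*pv k + E 0 0 * (M k k + M k k) := by
  rw [EQ_px_fun hE]
  rw [px_add (smooth_mul (smooth_px hE k) smooth_quad) (smooth_mul hE smooth_quad) k 0 0,
    px_mul (smooth_px hE k) smooth_quad k 0 0, px_mul hE smooth_quad k 0 0, quad_px, quad_px]
  simp only [quad_val0]
  ring

lemma EQ_valkl (hE : SmoothFn E) (k l : Fin n) :
    px k (px l (fun t x => E t x * quadF 0 q e pv sv M t x)) 0 0
      = px l E 0 0 * pv k + px k E 0 0 * pv l + E 0 0 * (M l k + M k l) := by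
  rw [EQ_px_fun hE]
  rw [px_add (smooth_mul (smooth_px hE l) smooth_quad) (smooth_mul hE smooth_quad) k 0 0,
    px_mul (smooth_px hE l) smooth_quad k 0 0, px_mul hE smooth_quad k 0 0, quad_px, quad_px]
  simp only [quad_val0]
  ring

/-- Master evaluation of operator terms on `E * Q` at the origin, `Q` quadratic vanishing at 0. -/
lemma DEquad (hE : SmoothFn E) (q e : ℂ) (pv sv : Fin n → ℂ) (M : Fin n → Fin n → ℂ)
    (j : ℕ) (α : Fin n → ℕ) (h : j + ∑ k, α k ≤ 2) :
    (j = 0 ∧ α = (fun _ => 0)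
      ∧ (pt^[j] (mderiv α (fun t x => E t x * quadF 0 q e pv sv M t x))) 0 0 = 0)
  ∨ (j = 1 ∧ α = (fun _ => 0)
      ∧ (pt^[j] (mderiv α (fun t x => E t x * quadF 0 q e pv sv M t x))) 0 0 = E 0 0 * q)
  ∨ (j = 2 ∧ α = (fun _ => 0)
      ∧ (pt^[j] (mderiv α (fun t x => E t x * quadF 0 q e pv sv M t x))) 0 0
          = 2*(pt E 0 0)*q + E 0 0 * (2*e))
  ∨ (∃ k, j = 0 ∧ α = (fun i => if i = k then 1 else 0)
      ∧ (pt^[j] (mderiv α (fun t x => E t x * quadF 0 q e pv sv M t x))) 0 0 = E 0 0 * pv k)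
  ∨ (∃ k, j = 1 ∧ α = (fun i => if i = k then 1 else 0)
      ∧ (pt^[j] (mderiv α (fun t x => E t x * quadF 0 q e pv sv M t x))) 0 0
          = px k E 0 0 * q + pt E 0 0 * pv k + E 0 0 * sv k)
  ∨ (∃ k, j = 0 ∧ α = (fun i => if i = k then 2 else 0)
      ∧ (pt^[j] (mderiv α (fun t x => E t x * quadF 0 q e pv sv M t x))) 0 0
          = 2*(px k E 0 0)*pv k + E 0 0 * (M k k + M k k))
  ∨ (∃ k l, k ≠ l ∧ j = 0 ∧ α = (fun i => if i = k then 1 else if i = l then 1 else 0)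
      ∧ (pt^[j] (mderiv α (fun t x => E t x * quadF 0 q e pv sv M t x))) 0 0
          = px l E 0 0 * pv k + px k E 0 0 * pv l + E 0 0 * (M l k + M k l)) := by
  have hS : ∑ k, α k ≤ 2 := by omega
  rcases classify_alpha α hS with h0 | ⟨k, h1⟩ | ⟨k, h2⟩ | ⟨k, l, hkl, h3⟩
  · have hm : mderiv α (fun t x => E t x * quadF 0 q e pv sv M t x)
        = (fun t x => E t x * quadF 0 q e pv sv M t x) :=
      mderiv_of_zero (fun i => congrFun h0 i)
    have hj : j ≤ 2 := by omega
    interval_cases j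
    · exact Or.inl ⟨rfl, h0, by rw [hm]; simpa using EQ_val00⟩
    · refine Or.inr (Or.inl ⟨rfl, h0, ?_⟩)
      rw [hm, Function.iterate_one]
      exact EQ_val10 hE
    · refine Or.inr (Or.inr (Or.inl ⟨rfl, h0, ?_⟩))
      rw [hm]
      exact EQ_val20 hE
  · have hs : ∑ i, α i = 1 := by rw [h1]; exact sum_single_eq k
    have hαk : α k = 1 := by rw [h1]; simp
    have hm : mderiv α (fun t x => E t x * quadF 0 q e pv sv M t x)
        = px k (fun t x => E t x * quadF 0 q e pv sv M t x) := by
      rw [mderiv_of_single k (fun i hi => by rw [h1]; simp [hi]), hαk, Function.iterate_one]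
    have hj : j ≤ 1 := by omega
    interval_cases j
    · refine Or.inr (Or.inr (Or.inr (Or.inl ⟨k, rfl, h1, ?_⟩)))
      rw [hm]
      exact EQ_val0k hE k
    · refine Or.inr (Or.inr (Or.inr (Or.inr (Or.inl ⟨k, rfl, h1, ?_⟩))))
      rw [hm, Function.iterate_one]
      exact EQ_val1k hE k
  · have hs : ∑ i, α i = 2 := by rw [h2]; exact sum_two_eq k
    have hαk : α k = 2 := by rw [h2]; simp
    have hj : j = 0 := by omega
    subst hj
    refine Or.inr (Or.inr (Or.inr (Or.inr (Or.inr (Or.inl ⟨k, rfl, h2, ?_⟩)))))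
    have hm : mderiv α (fun t x => E t x * quadF 0 q e pv sv M t x)
        = px k (px k (fun t x => E t x * quadF 0 q e pv sv M t x)) := by
      rw [mderiv_of_single k (fun i hi => by rw [h2]; simp [hi]), hαk]
      rfl
    rw [hm]
    exact EQ_val2k hE k
  · have hs : ∑ i, α i = 2 := by rw [h3]; exact sum_pairfn_eq hkl
    have hαk : α k = 1 := by rw [h3]; simp
    have hαl : α l = 1 := by rw [h3]; simp [Ne.symm hkl]
    have hj : j = 0 := by omega
    subst hj
    refine Or.inr (Or.inr (Or.inr (Or.inr (Or.inr (Or.inr ⟨k, l, hkl, rfl, h3, ?_⟩)))))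
    rcases mderiv_of_pair (α := α) (u := fun t x => E t x * quadF 0 q e pv sv M t x) k l hkl
      (fun i hik hil => by rw [h3]; simp [hik, hil]) with hm | hm
    · rw [hm, hαk, hαl]
      simp only [Function.iterate_one]
      exact EQ_valkl hE k l
    · rw [hm, hαk, hαl]
      simp only [Function.iterate_one, Function.iterate_zero, id_eq]
      rw [EQ_valkl hE l k]
      ring
end EQ

end Dsec

section Msec
variable {E : ℝ → (Fin n → ℝ) → ℂ}

/-- value of `pt^[j] (mderiv α U)` at 0 for a quad `U`, given the class; helper. -/
lemma Dq_zero {α : Fin n → ℕ} (b₂ q₂ e₂ : ℂ) (pv₂ sv₂ : Fin n → ℂ) (M₂ : Fin n → Fin n → ℂ)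
    (h0 : α = fun _ => 0) :
    mderiv α (quadF b₂ q₂ e₂ pv₂ sv₂ M₂) = quadF b₂ q₂ e₂ pv₂ sv₂ M₂ :=
  mderiv_of_zero (fun i => congrFun h0 i)

lemma Dmaster (hE : SmoothFn E) (q e : ℂ) (pv sv : Fin n → ℂ) (M : Fin n → Fin n → ℂ)
    (b₂ q₂ e₂ : ℂ) (pv₂ sv₂ : Fin n → ℂ) (M₂ : Fin n → Fin n → ℂ)
    (j : ℕ) (α : Fin n → ℕ) (h : j + ∑ k, α k ≤ 2) :
    (j = 0 ∧ α = (fun _ => 0)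
      ∧ (pt^[j] (mderiv α (fun t x => E t x * quadF 0 q e pv sv M t x))) 0 0 = 0
      ∧ (pt^[j] (mderiv α (quadF b₂ q₂ e₂ pv₂ sv₂ M₂))) 0 0 = b₂)
  ∨ (j = 1 ∧ α = (fun _ => 0)
      ∧ (pt^[j] (mderiv α (fun t x => E t x * quadF 0 q e pv sv M t x))) 0 0 = E 0 0 * q
      ∧ (pt^[j] (mderiv α (quadF b₂ q₂ e₂ pv₂ sv₂ M₂))) 0 0 = q₂)
  ∨ (j = 2 ∧ α = (fun _ => 0)
      ∧ (pt^[j] (mderiv α (fun t x => E t x * quadF 0 q e pv sv M t x))) 0 0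
          = 2*(pt E 0 0)*q + E 0 0 * (2*e)
      ∧ (pt^[j] (mderiv α (quadF b₂ q₂ e₂ pv₂ sv₂ M₂))) 0 0 = 2*e₂)
  ∨ (∃ k, j = 0 ∧ α = (fun i => if i = k then 1 else 0)
      ∧ (pt^[j] (mderiv α (fun t x => E t x * quadF 0 q e pv sv M t x))) 0 0 = E 0 0 * pv k
      ∧ (pt^[j] (mderiv α (quadF b₂ q₂ e₂ pv₂ sv₂ M₂))) 0 0 = pv₂ k)
  ∨ (∃ k, j = 1 ∧ α = (fun i => if i = k then 1 else 0)
      ∧ (pt^[j] (mderiv α (fun t x => E t x * quadF 0 q e pv sv M t x))) 0 0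
          = px k E 0 0 * q + pt E 0 0 * pv k + E 0 0 * sv k
      ∧ (pt^[j] (mderiv α (quadF b₂ q₂ e₂ pv₂ sv₂ M₂))) 0 0 = sv₂ k)
  ∨ (∃ k, j = 0 ∧ α = (fun i => if i = k then 2 else 0)
      ∧ (pt^[j] (mderiv α (fun t x => E t x * quadF 0 q e pv sv M t x))) 0 0
          = 2*(px k E 0 0)*pv k + E 0 0 * (M k k + M k k)
      ∧ (pt^[j] (mderiv α (quadF b₂ q₂ e₂ pv₂ sv₂ M₂))) 0 0 = M₂ k k + M₂ k k)
  ∨ (∃ k l, k ≠ l ∧ j = 0 ∧ α = (fun i => if i = k then 1 else if i = l then 1 else 0)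
      ∧ (pt^[j] (mderiv α (fun t x => E t x * quadF 0 q e pv sv M t x))) 0 0
          = px l E 0 0 * pv k + px k E 0 0 * pv l + E 0 0 * (M l k + M k l)
      ∧ (pt^[j] (mderiv α (quadF b₂ q₂ e₂ pv₂ sv₂ M₂))) 0 0 = M₂ k l + M₂ l k) := by
  have hS : ∑ k, α k ≤ 2 := by omega
  rcases classify_alpha α hS with h0 | ⟨k, h1⟩ | ⟨k, h2⟩ | ⟨k, l, hkl, h3⟩
  · have hm : mderiv α (fun t x => E t x * quadF 0 q e pv sv M t x)
        = (fun t x => E t x * quadF 0 q e pv sv M t x) :=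
      mderiv_of_zero (fun i => congrFun h0 i)
    have hm₂ := Dq_zero b₂ q₂ e₂ pv₂ sv₂ M₂ h0
    have hj : j ≤ 2 := by omega
    interval_cases j
    · exact Or.inl ⟨rfl, h0, by rw [hm]; simpa using EQ_val00,
        by rw [hm₂]; simpa using quad_val0⟩
    · refine Or.inr (Or.inl ⟨rfl, h0, ?_, ?_⟩)
      · rw [hm, Function.iterate_one]; exact EQ_val10 hE
      · rw [hm₂, Function.iterate_one, quad_pt]; exact quad_val0
    · refine Or.inr (Or.inr (Or.inl ⟨rfl, h0, ?_, ?_⟩))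
      · rw [hm]; exact EQ_val20 hE
      · rw [hm₂]
        show pt (pt (quadF b₂ q₂ e₂ pv₂ sv₂ M₂)) 0 0 = 2*e₂
        rw [quad_pt, quad_pt]; exact quad_val0
  · have hαk : α k = 1 := by rw [h1]; simp
    have hs : ∑ i, α i = 1 := by rw [h1]; exact sum_single_eq k
    have hm : mderiv α (fun t x => E t x * quadF 0 q e pv sv M t x)
        = px k (fun t x => E t x * quadF 0 q e pv sv M t x) := by
      rw [mderiv_of_single k (fun i hi => by rw [h1]; simp [hi]), hαk, Function.iterate_one]
    have hm₂ : mderiv α (quadF b₂ q₂ e₂ pv₂ sv₂ M₂) = px k (quadF b₂ q₂ e₂ pv₂ sv₂ M₂) := by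
      rw [mderiv_of_single k (fun i hi => by rw [h1]; simp [hi]), hαk, Function.iterate_one]
    have hj : j ≤ 1 := by omega
    interval_cases j
    · refine Or.inr (Or.inr (Or.inr (Or.inl ⟨k, rfl, h1, ?_, ?_⟩)))
      · rw [hm]; exact EQ_val0k hE k
      · rw [hm₂]
        show px k (quadF b₂ q₂ e₂ pv₂ sv₂ M₂) 0 0 = pv₂ k
        rw [quad_px]; exact quad_val0
    · refine Or.inr (Or.inr (Or.inr (Or.inr (Or.inl ⟨k, rfl, h1, ?_, ?_⟩))))
      · rw [hm, Function.iterate_one]; exact EQ_val1k hE k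
      · rw [hm₂, Function.iterate_one, quad_px, quad_pt]; exact quad_val0
  · have hαk : α k = 2 := by rw [h2]; simp
    have hs : ∑ i, α i = 2 := by rw [h2]; exact sum_two_eq k
    have hj : j = 0 := by omega
    subst hj
    refine Or.inr (Or.inr (Or.inr (Or.inr (Or.inr (Or.inl ⟨k, rfl, h2, ?_, ?_⟩)))))
    · have hm : mderiv α (fun t x => E t x * quadF 0 q e pv sv M t x)
          = px k (px k (fun t x => E t x * quadF 0 q e pv sv M t x)) := by
        rw [mderiv_of_single k (fun i hi => by rw [h2]; simp [hi]), hαk]; rfl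
      rw [hm]; exact EQ_val2k hE k
    · have hm₂ : mderiv α (quadF b₂ q₂ e₂ pv₂ sv₂ M₂)
          = px k (px k (quadF b₂ q₂ e₂ pv₂ sv₂ M₂)) := by
        rw [mderiv_of_single k (fun i hi => by rw [h2]; simp [hi]), hαk]; rfl
      rw [hm₂]
      show px k (px k (quadF b₂ q₂ e₂ pv₂ sv₂ M₂)) 0 0 = M₂ k k + M₂ k k
      rw [quad_px, quad_px]; exact quad_val0
  · have hαk : α k = 1 := by rw [h3]; simp
    have hαl : α l = 1 := by rw [h3]; simp [Ne.symm hkl]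
    have hs : ∑ i, α i = 2 := by rw [h3]; exact sum_pairfn_eq hkl
    have hj : j = 0 := by omega
    subst hj
    refine Or.inr (Or.inr (Or.inr (Or.inr (Or.inr (Or.inr ⟨k, l, hkl, rfl, h3, ?_, ?_⟩)))))
    · rcases mderiv_of_pair (α := α) (u := fun t x => E t x * quadF 0 q e pv sv M t x) k l hkl
        (fun i hik hil => by rw [h3]; simp [hik, hil]) with hm | hm
      · rw [hm, hαk, hαl]
        simp only [Function.iterate_one, Function.iterate_zero, id_eq]
        exact EQ_valkl hE k l
      · rw [hm, hαk, hαl]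
        simp only [Function.iterate_one, Function.iterate_zero, id_eq]
        rw [EQ_valkl hE l k]
        ring
    · rcases mderiv_of_pair (α := α) (u := quadF b₂ q₂ e₂ pv₂ sv₂ M₂) k l hkl
        (fun i hik hil => by rw [h3]; simp [hik, hil]) with hm | hm
      · rw [hm, hαk, hαl]
        simp only [Function.iterate_one, Function.iterate_zero, id_eq]
        show px k (px l (quadF b₂ q₂ e₂ pv₂ sv₂ M₂)) 0 0 = M₂ k l + M₂ l k
        rw [quad_px, quad_px]
        exact quad_val0.trans (add_comm _ _)
      · rw [hm, hαk, hαl]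
        simp only [Function.iterate_one, Function.iterate_zero, id_eq]
        show px l (px k (quadF b₂ q₂ e₂ pv₂ sv₂ M₂)) 0 0 = M₂ k l + M₂ l k
        rw [quad_px, quad_px]
        exact quad_val0
end Msec

section Fsec
variable {θ : ℝ → (Fin n → ℝ) → ℝ}

lemma smooth_expTheta (hθ : SmoothR θ) :
    SmoothFn (fun t x => Complex.exp (Complex.I * ((θ t x : ℝ) : ℂ))) := by
  unfold SmoothFn
  apply Complex.contDiff_exp.comp
  exact ContDiff.mul contDiff_const (Complex.ofRealCLM.contDiff.comp hθ)

lemma diff_slice_xR (hθ : SmoothR θ) (t : ℝ) (x : Fin n → ℝ) (k : Fin n) (s₀ : ℝ) :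
    DifferentiableAt ℝ (fun s => θ t (Function.update x k s)) s₀ :=
  (((hθ.differentiable (by simp)).differentiableAt).hasFDerivAt.comp_hasDerivAt s₀
    (hasDerivAt_xpath t x k s₀)).differentiableAt

lemma pxE_val (hθ : SmoothR θ) (j : Fin n) :
    px j (fun t x => Complex.exp (Complex.I * ((θ t x : ℝ) : ℂ))) 0 0
      = Complex.I * ((pxR j θ 0 0 : ℝ) : ℂ) * Complex.exp (Complex.I * ((θ 0 0 : ℝ) : ℂ)) := by
  have hg : HasDerivAt (fun s => θ 0 (Function.update (0 : Fin n → ℝ) j s))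
      (pxR j θ 0 0) ((0 : Fin n → ℝ) j) :=
    (diff_slice_xR hθ 0 0 j ((0 : Fin n → ℝ) j)).hasDerivAt
  have H := ((hg.ofReal_comp.const_mul Complex.I).cexp)
  show deriv (fun s => Complex.exp (Complex.I * ((θ 0 (Function.update (0:Fin n → ℝ) j s) : ℝ) : ℂ)))
      ((0 : Fin n → ℝ) j) = _
  rw [H.deriv, Function.update_eq_self]
  ring

end Fsec

section Gsec
variable {b q e : ℂ} {pv sv : Fin n → ℂ} {M : Fin n → Fin n → ℂ}

lemma diag_mem (ε : Fin n → ℝ) (hε : ∀ i, ε i = 1 ∨ ε i = -1) :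
    Matrix.diagonal ε ∈ Matrix.orthogonalGroup (Fin n) ℝ := by
  rw [Matrix.mem_orthogonalGroup_iff,
    Matrix.diagonal_transpose, Matrix.diagonal_mul_diagonal, ← Matrix.diagonal_one]
  refine congrArg Matrix.diagonal ?_
  funext i
  rcases hε i with h | h <;> simp [h]

noncomputable def permM (σ : Equiv.Perm (Fin n)) : Matrix (Fin n) (Fin n) ℝ :=
  Matrix.of fun i m => if m = σ i then 1 else 0

lemma permM_mulVec (σ : Equiv.Perm (Fin n)) (x : Fin n → ℝ) :
    (permM σ).mulVec x = fun i => x (σ i) := by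
  funext i
  simp [permM, Matrix.mulVec, dotProduct, ite_mul, one_mul, zero_mul,
    Finset.sum_ite_eq']

lemma permM_mem (σ : Equiv.Perm (Fin n)) : permM σ ∈ Matrix.orthogonalGroup (Fin n) ℝ := by
  rw [Matrix.mem_orthogonalGroup_iff]
  ext i m
  rw [Matrix.mul_apply, Matrix.one_apply]
  have hterm : ∀ k, permM (n := n) σ i k * (permM σ).transpose k m
      = if k = σ i then (if k = σ m then (1:ℝ) else 0) else 0 := by
    intro k
    simp only [permM, Matrix.transpose_apply, Matrix.of_apply]
    by_cases h1 : k = σ i <;> by_cases h2 : k = σ m <;> simp [h1, h2]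
  rw [Finset.sum_congr rfl (fun k _ => hterm k), Finset.sum_ite_eq']
  simp [EmbeddingLike.apply_eq_iff_eq]

lemma quad_comp_diag (ε : Fin n → ℝ) :
    (fun t x => quadF b q e pv sv M t ((Matrix.diagonal ε).mulVec x))
      = quadF b q e (fun i => pv i * ((ε i : ℝ) : ℂ)) (fun i => sv i * ((ε i : ℝ) : ℂ))
        (fun i m => M i m * ((ε i : ℝ) : ℂ) * ((ε m : ℝ) : ℂ)) := by
  funext t x
  simp only [quadF, Matrix.mulVec_diagonal, Complex.ofReal_mul]
  rw [Finset.sum_congr rfl (fun i _ => show pv i * ((ε i:ℂ) * (x i:ℂ))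
      = (pv i * (ε i:ℂ)) * (x i:ℂ) from by ring),
    Finset.sum_congr rfl (fun i _ => show sv i * ((ε i:ℂ) * (x i:ℂ))
      = (sv i * (ε i:ℂ)) * (x i:ℂ) from by ring),
    Finset.sum_congr rfl (fun i _ => Finset.sum_congr rfl (fun m _ =>
      show M i m * ((ε i:ℂ) * (x i:ℂ)) * ((ε m:ℂ) * (x m:ℂ))
        = (M i m * (ε i:ℂ) * (ε m:ℂ)) * (x i:ℂ) * (x m:ℂ) from by ring))]

lemma quad_comp_perm (σ : Equiv.Perm (Fin n)) (hσ : ∀ i, σ (σ i) = i) :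
    (fun t x => quadF b q e pv sv M t ((permM σ).mulVec x))
      = quadF b q e (fun i => pv (σ i)) (fun i => sv (σ i)) (fun i m => M (σ i) (σ m)) := by
  funext t x
  simp only [permM_mulVec]
  simp only [quadF]
  rw [show (∑ i, pv i * ((x (σ i) : ℝ):ℂ)) = ∑ i, pv (σ i) * ((x i : ℝ):ℂ) from
      Fintype.sum_equiv σ _ _ (fun i => by rw [hσ i]),
    show (∑ i, sv i * ((x (σ i) : ℝ):ℂ)) = ∑ i, sv (σ i) * ((x i : ℝ):ℂ) from
      Fintype.sum_equiv σ _ _ (fun i => by rw [hσ i]),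
    show (∑ i, ∑ m, M i m * ((x (σ i) : ℝ):ℂ) * ((x (σ m) : ℝ):ℂ))
        = ∑ i, ∑ m, M (σ i) (σ m) * ((x i : ℝ):ℂ) * ((x m : ℝ):ℂ) from
      Fintype.sum_equiv σ _ _ (fun i => Fintype.sum_equiv σ _ _
        (fun m => by rw [hσ i, hσ m]))]

lemma quad_shift_lin (pv : Fin n → ℂ) (v : Fin n → ℝ) :
    (fun t x => quadF 0 0 0 pv 0 0 t (x - t • v))
      = quadF 0 (-∑ i, pv i * ((v i : ℝ):ℂ)) 0 pv 0 0 := by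
  funext t x
  simp only [quadF, Pi.sub_apply, Pi.smul_apply, smul_eq_mul, Complex.ofReal_sub,
    Complex.ofReal_mul, Pi.zero_apply, zero_mul, mul_zero, add_zero, zero_add,
    Finset.sum_const_zero]
  rw [Finset.sum_congr rfl (fun i _ => mul_sub (pv i) ((x i : ℝ):ℂ) ((t:ℂ) * (v i:ℂ))),
    Finset.sum_sub_distrib,
    show (∑ i, pv i * ((t:ℂ) * ((v i : ℝ):ℂ))) = (t:ℂ) * ∑ i, pv i * ((v i : ℝ):ℂ) from by
      rw [Finset.mul_sum]
      exact Finset.sum_congr rfl (fun i _ => by ring)]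
  ring

lemma quad_shift_sv (sv : Fin n → ℂ) (v : Fin n → ℝ) :
    (fun t x => quadF 0 0 0 0 sv 0 t (x - t • v))
      = quadF 0 0 (-∑ i, sv i * ((v i : ℝ):ℂ)) 0 sv 0 := by
  funext t x
  simp only [quadF, Pi.sub_apply, Pi.smul_apply, smul_eq_mul, Complex.ofReal_sub,
    Complex.ofReal_mul, Pi.zero_apply, zero_mul, mul_zero, add_zero, zero_add,
    Finset.sum_const_zero]
  rw [Finset.sum_congr rfl (fun i _ => mul_sub (sv i) ((x i : ℝ):ℂ) ((t:ℂ) * (v i:ℂ))),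
    Finset.sum_sub_distrib,
    show (∑ i, sv i * ((t:ℂ) * ((v i : ℝ):ℂ))) = (t:ℂ) * ∑ i, sv i * ((v i : ℝ):ℂ) from by
      rw [Finset.mul_sum]
      exact Finset.sum_congr rfl (fun i _ => by ring)]
  ring
end Gsec

lemma smooth_one : SmoothFn (fun _ _ => (1:ℂ) : ℝ → (Fin n → ℝ) → ℂ) := contDiff_const
lemma pt_c0 (c : ℂ) (t : ℝ) (x : Fin n → ℝ) : pt (fun _ _ => c) t x = 0 := by simp [pt]
lemma px_c0 (c : ℂ) (k : Fin n) (t : ℝ) (x : Fin n → ℝ) : px k (fun _ _ => c) t x = 0 := by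
  simp [px]

lemma one_mul_fun (f : ℝ → (Fin n → ℝ) → ℂ) :
    f = fun t x => (fun _ _ => (1:ℂ)) t x * f t x := funext fun t => funext fun x => (one_mul _).symm

lemma step_r1 (a : ℕ × (Fin n → ℕ) → ℂ)
    (hrot : ∀ R ∈ Matrix.orthogonalGroup (Fin n) ℝ,
      ∀ u : ℝ → (Fin n → ℝ) → ℂ, SmoothFn u → ∀ (t : ℝ) (x : Fin n → ℝ),
        applyOpC 2 a (fun t' x' => u t' (R.mulVec x')) t x = applyOpC 2 a u t (R.mulVec x))
    (j : Fin n) :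
    a (0, fun i => if i = j then 1 else 0) = 0 := by
  classical
  set ε : Fin n → ℝ := fun i => if i = j then -1 else 1 with hε
  set pv₂ : Fin n → ℂ := fun i => if i = j then 1 else 0 with hpv
  have hmem := diag_mem ε (fun i => by by_cases h : i = j <;> simp [hε, h])
  have heq := hrot _ hmem (quadF 0 0 0 pv₂ 0 0) smooth_quad 0 0
  rw [show (fun t' x' => quadF 0 0 0 pv₂ 0 0 t' ((Matrix.diagonal ε).mulVec x'))
      = quadF 0 0 0 (fun i => pv₂ i * ((ε i : ℝ):ℂ)) (fun i => (0:ℂ) * ((ε i : ℝ):ℂ))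
          (fun i m => (0:ℂ) * ((ε i : ℝ):ℂ) * ((ε m : ℝ):ℂ)) from quad_comp_diag ε,
    Matrix.mulVec_zero] at heq
  rw [one_mul_fun (quadF 0 0 0 (fun i => pv₂ i * ((ε i : ℝ):ℂ)) (fun i => (0:ℂ) * ((ε i : ℝ):ℂ))
      (fun i m => (0:ℂ) * ((ε i : ℝ):ℂ) * ((ε m : ℝ):ℂ)))] at heq
  simp only [applyOpC] at heq
  have hp₀ : ((0:ℕ), fun i => if i = j then (1:ℕ) else 0) ∈ idxSet n 2 := by
    rw [mem_idxSet_iff]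
    simp [sum_single_eq]
  have key := sum_cancel₁ (idxSet n 2) _ _ heq hp₀ ?hoth
  case hoth =>
    rintro ⟨jj, α⟩ hp hne
    have hb := mem_idxSet_iff.mp hp
    rcases Dmaster (E := fun _ _ => (1:ℂ)) smooth_one 0 0
        (fun i => pv₂ i * ((ε i : ℝ):ℂ)) (fun i => (0:ℂ) * ((ε i : ℝ):ℂ))
        (fun i m => (0:ℂ) * ((ε i : ℝ):ℂ) * ((ε m : ℝ):ℂ))
        0 0 0 pv₂ 0 0 jj α hb with
      ⟨hj, hα, hV₁, hV₂⟩ | ⟨hj, hα, hV₁, hV₂⟩ | ⟨hj, hα, hV₁, hV₂⟩ |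
      ⟨k, hj, hα, hV₁, hV₂⟩ | ⟨k, hj, hα, hV₁, hV₂⟩ | ⟨k, hj, hα, hV₁, hV₂⟩ |
      ⟨k, l, hkl, hj, hα, hV₁, hV₂⟩
    · rw [hV₁, hV₂]
    · rw [hV₁, hV₂]; all_goals ring
    · rw [hV₁, hV₂]; all_goals ring
    · -- first-order class: k ≠ j since p ≠ p₀
      subst hj; subst hα
      have hkj : k ≠ j := by
        rintro rfl
        exact hne rfl
      rw [hV₁, hV₂]
      simp [hpv, hkj]
    · rw [hV₁, hV₂, pt_c0, px_c0]
      all_goals simp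
    · rw [hV₁, hV₂, px_c0]
      all_goals simp
    · rw [hV₁, hV₂, px_c0, px_c0]
      all_goals simp
  -- now evaluate key at p₀
  have hD₁ : (pt^[(0:ℕ)] (mderiv (fun i => if i = j then (1:ℕ) else 0)
      (fun t x => (fun _ _ => (1:ℂ)) t x * quadF 0 0 0 (fun i => pv₂ i * ((ε i : ℝ):ℂ))
        (fun i => (0:ℂ) * ((ε i : ℝ):ℂ))
        (fun i m => (0:ℂ) * ((ε i : ℝ):ℂ) * ((ε m : ℝ):ℂ)) t x))) 0 0
      = pv₂ j * ((ε j : ℝ):ℂ) := by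
    rw [mderiv_of_single j (fun i hi => by simp [hi])]
    simp only [eq_self_iff_true, if_true, Function.iterate_one, Function.iterate_zero, id_eq]
    rw [EQ_val0k smooth_one j]
    simp
  have hD₂ : (pt^[(0:ℕ)] (mderiv (fun i => if i = j then (1:ℕ) else 0)
      (quadF 0 0 0 pv₂ 0 0))) 0 0 = pv₂ j := by
    rw [mderiv_of_single j (fun i hi => by simp [hi])]
    simp only [eq_self_iff_true, if_true, Function.iterate_one, Function.iterate_zero, id_eq]
    rw [quad_px]
    exact quad_val0
  simp only [hD₁, hD₂] at key
  have hεj : ((ε j : ℝ):ℂ) = -1 := by simp [hε]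
  have hpvj : pv₂ j = 1 := by simp [hpv]
  rw [hεj, hpvj] at key
  have : (2:ℂ) * a (0, fun i => if i = j then 1 else 0) = 0 := by linear_combination -key
  simpa using this

lemma step_r2 (a : ℕ × (Fin n → ℕ) → ℂ)
    (hrot : ∀ R ∈ Matrix.orthogonalGroup (Fin n) ℝ,
      ∀ u : ℝ → (Fin n → ℝ) → ℂ, SmoothFn u → ∀ (t : ℝ) (x : Fin n → ℝ),
        applyOpC 2 a (fun t' x' => u t' (R.mulVec x')) t x = applyOpC 2 a u t (R.mulVec x))
    (j : Fin n) :
    a (1, fun i => if i = j then 1 else 0) = 0 := by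
  classical
  set ε : Fin n → ℝ := fun i => if i = j then -1 else 1 with hε
  set sv₂ : Fin n → ℂ := fun i => if i = j then 1 else 0 with hsv
  have hmem := diag_mem ε (fun i => by by_cases h : i = j <;> simp [hε, h])
  have heq := hrot _ hmem (quadF 0 0 0 0 sv₂ 0) smooth_quad 0 0
  rw [show (fun t' x' => quadF 0 0 0 0 sv₂ 0 t' ((Matrix.diagonal ε).mulVec x'))
      = quadF 0 0 0 (fun i => (0:ℂ) * ((ε i : ℝ):ℂ)) (fun i => sv₂ i * ((ε i : ℝ):ℂ))
          (fun i m => (0:ℂ) * ((ε i : ℝ):ℂ) * ((ε m : ℝ):ℂ)) from quad_comp_diag ε,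
    Matrix.mulVec_zero] at heq
  rw [one_mul_fun (quadF 0 0 0 (fun i => (0:ℂ) * ((ε i : ℝ):ℂ)) (fun i => sv₂ i * ((ε i : ℝ):ℂ))
      (fun i m => (0:ℂ) * ((ε i : ℝ):ℂ) * ((ε m : ℝ):ℂ)))] at heq
  simp only [applyOpC] at heq
  have hp₀ : ((1:ℕ), fun i => if i = j then (1:ℕ) else 0) ∈ idxSet n 2 := by
    rw [mem_idxSet_iff]
    simp [sum_single_eq]
  have key := sum_cancel₁ (idxSet n 2) _ _ heq hp₀ ?hoth
  case hoth =>
    rintro ⟨jj, α⟩ hp hne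
    have hb := mem_idxSet_iff.mp hp
    rcases Dmaster (E := fun _ _ => (1:ℂ)) smooth_one 0 0
        (fun i => (0:ℂ) * ((ε i : ℝ):ℂ)) (fun i => sv₂ i * ((ε i : ℝ):ℂ))
        (fun i m => (0:ℂ) * ((ε i : ℝ):ℂ) * ((ε m : ℝ):ℂ))
        0 0 0 0 sv₂ 0 jj α hb with
      ⟨hj, hα, hV₁, hV₂⟩ | ⟨hj, hα, hV₁, hV₂⟩ | ⟨hj, hα, hV₁, hV₂⟩ |
      ⟨k, hj, hα, hV₁, hV₂⟩ | ⟨k, hj, hα, hV₁, hV₂⟩ | ⟨k, hj, hα, hV₁, hV₂⟩ |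
      ⟨k, l, hkl, hj, hα, hV₁, hV₂⟩
    · rw [hV₁, hV₂]
    · rw [hV₁, hV₂]; all_goals ring
    · rw [hV₁, hV₂]; all_goals ring
    · rw [hV₁, hV₂]
      all_goals simp
    · subst hj; subst hα
      have hkj : k ≠ j := by
        rintro rfl
        exact hne rfl
      rw [hV₁, hV₂, pt_c0, px_c0]
      all_goals simp [hsv, hkj]
    · rw [hV₁, hV₂, px_c0]
      all_goals simp
    · rw [hV₁, hV₂, px_c0, px_c0]
      all_goals simp
  have hD₁ : (pt^[(1:ℕ)] (mderiv (fun i => if i = j then (1:ℕ) else 0)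
      (fun t x => (fun _ _ => (1:ℂ)) t x * quadF 0 0 0 (fun i => (0:ℂ) * ((ε i : ℝ):ℂ))
        (fun i => sv₂ i * ((ε i : ℝ):ℂ))
        (fun i m => (0:ℂ) * ((ε i : ℝ):ℂ) * ((ε m : ℝ):ℂ)) t x))) 0 0
      = sv₂ j * ((ε j : ℝ):ℂ) := by
    rw [mderiv_of_single j (fun i hi => by simp [hi])]
    simp only [eq_self_iff_true, if_true, Function.iterate_one, Function.iterate_zero, id_eq]
    rw [EQ_val1k smooth_one j, pt_c0, px_c0]
    simp
  have hD₂ : (pt^[(1:ℕ)] (mderiv (fun i => if i = j then (1:ℕ) else 0)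
      (quadF 0 0 0 0 sv₂ 0))) 0 0 = sv₂ j := by
    rw [mderiv_of_single j (fun i hi => by simp [hi])]
    simp only [eq_self_iff_true, if_true, Function.iterate_one, Function.iterate_zero, id_eq]
    rw [quad_px, quad_pt]
    exact quad_val0
  simp only [hD₁, hD₂] at key
  have hεj : ((ε j : ℝ):ℂ) = -1 := by simp [hε]
  have hsvj : sv₂ j = 1 := by simp [hsv]
  rw [hεj, hsvj] at key
  have : (2:ℂ) * a (1, fun i => if i = j then 1 else 0) = 0 := by linear_combination -key
  simpa using this

lemma step_r3 (a : ℕ × (Fin n → ℕ) → ℂ)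
    (hrot : ∀ R ∈ Matrix.orthogonalGroup (Fin n) ℝ,
      ∀ u : ℝ → (Fin n → ℝ) → ℂ, SmoothFn u → ∀ (t : ℝ) (x : Fin n → ℝ),
        applyOpC 2 a (fun t' x' => u t' (R.mulVec x')) t x = applyOpC 2 a u t (R.mulVec x))
    (j l : Fin n) (hjl : j ≠ l) :
    a (0, fun i => if i = j then 1 else if i = l then 1 else 0) = 0 := by
  classical
  set ε : Fin n → ℝ := fun i => if i = j then -1 else 1 with hε
  set M₂ : Fin n → Fin n → ℂ := fun i m => (if i = j then 1 else 0) * (if m = l then 1 else 0)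
    with hM
  have hmem := diag_mem ε (fun i => by by_cases h : i = j <;> simp [hε, h])
  have heq := hrot _ hmem (quadF 0 0 0 0 0 M₂) smooth_quad 0 0
  rw [show (fun t' x' => quadF 0 0 0 0 0 M₂ t' ((Matrix.diagonal ε).mulVec x'))
      = quadF 0 0 0 (fun i => (0:ℂ) * ((ε i : ℝ):ℂ)) (fun i => (0:ℂ) * ((ε i : ℝ):ℂ))
          (fun i m => M₂ i m * ((ε i : ℝ):ℂ) * ((ε m : ℝ):ℂ)) from quad_comp_diag ε,
    Matrix.mulVec_zero] at heq
  rw [one_mul_fun (quadF 0 0 0 (fun i => (0:ℂ) * ((ε i : ℝ):ℂ)) (fun i => (0:ℂ) * ((ε i : ℝ):ℂ))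
      (fun i m => M₂ i m * ((ε i : ℝ):ℂ) * ((ε m : ℝ):ℂ)))] at heq
  simp only [applyOpC] at heq
  have hp₀ : ((0:ℕ), fun i => if i = j then (1:ℕ) else if i = l then 1 else 0) ∈ idxSet n 2 := by
    rw [mem_idxSet_iff]
    simp [sum_pairfn_eq hjl]
  have hMzero : ∀ A B : Fin n, A ≠ B →
      (A = j ∧ B = l) ∨ (M₂ A B = 0) := by
    intro A B _
    by_cases hA : A = j
    · by_cases hB : B = l
      · exact Or.inl ⟨hA, hB⟩
      · exact Or.inr (by simp [hM, hB])
    · exact Or.inr (by simp [hM, hA])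
  have key := sum_cancel₁ (idxSet n 2) _ _ heq hp₀ ?hoth
  case hoth =>
    rintro ⟨jj, α⟩ hp hne
    have hb := mem_idxSet_iff.mp hp
    rcases Dmaster (E := fun _ _ => (1:ℂ)) smooth_one 0 0
        (fun i => (0:ℂ) * ((ε i : ℝ):ℂ)) (fun i => (0:ℂ) * ((ε i : ℝ):ℂ))
        (fun i m => M₂ i m * ((ε i : ℝ):ℂ) * ((ε m : ℝ):ℂ))
        0 0 0 0 0 M₂ jj α hb with
      ⟨hj, hα, hV₁, hV₂⟩ | ⟨hj, hα, hV₁, hV₂⟩ | ⟨hj, hα, hV₁, hV₂⟩ |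
      ⟨k, hj, hα, hV₁, hV₂⟩ | ⟨k, hj, hα, hV₁, hV₂⟩ | ⟨k, hj, hα, hV₁, hV₂⟩ |
      ⟨k, l', hkl', hj, hα, hV₁, hV₂⟩
    · rw [hV₁, hV₂]
    · rw [hV₁, hV₂]; all_goals ring
    · rw [hV₁, hV₂]; all_goals ring
    · rw [hV₁, hV₂]
      all_goals simp
    · rw [hV₁, hV₂, pt_c0, px_c0]
      all_goals simp
    · -- diagonal second-order: M₂ k k = 0 since j ≠ l
      rw [hV₁, hV₂, px_c0]
      have hMkk : M₂ k k = 0 := by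
        by_cases hkj : k = j
        · simp [hM, hkj, hjl]
        · simp [hM, hkj]
      rw [hMkk]
      ring
    · -- pair class
      subst hj; subst hα
      have hnotboth : ¬(k = j ∧ l' = l) := by
        rintro ⟨rfl, rfl⟩
        exact hne rfl
      have hnotswap : ¬(k = l ∧ l' = j) := by
        rintro ⟨rfl, rfl⟩
        apply hne
        have : (fun i => if i = l' then (1:ℕ) else if i = k then 1 else 0)
            = fun i => if i = k then 1 else if i = l' then 1 else 0 := by
          funext i
          by_cases h1 : i = l' <;> by_cases h2 : i = k
          · exact absurd (h1.symm.trans h2) (Ne.symm hkl')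
          · simp [h1, h2]
          · simp [h1, h2]
          · simp [h1, h2]
        rw [Prod.mk.injEq]
        exact ⟨rfl, this.symm⟩
      have hz1 : M₂ k l' = 0 := by
        rcases hMzero k l' hkl' with ⟨h1, h2⟩ | h
        · exact absurd ⟨h1, h2⟩ hnotboth
        · exact h
      have hz2 : M₂ l' k = 0 := by
        rcases hMzero l' k (Ne.symm hkl') with ⟨h1, h2⟩ | h
        · exact absurd ⟨h2, h1⟩ hnotswap
        · exact h
      rw [hV₁, hV₂, px_c0, px_c0, hz1, hz2]
      ring
  have hαj : (fun i => if i = j then (1:ℕ) else if i = l then 1 else 0) j = 1 := by simp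
  have hαl : (fun i => if i = j then (1:ℕ) else if i = l then 1 else 0) l = 1 := by
    simp [Ne.symm hjl]
  have hD₁ : (pt^[(0:ℕ)] (mderiv (fun i => if i = j then (1:ℕ) else if i = l then 1 else 0)
      (fun t x => (fun _ _ => (1:ℂ)) t x * quadF 0 0 0 (fun i => (0:ℂ) * ((ε i : ℝ):ℂ))
        (fun i => (0:ℂ) * ((ε i : ℝ):ℂ))
        (fun i m => M₂ i m * ((ε i : ℝ):ℂ) * ((ε m : ℝ):ℂ)) t x))) 0 0
      = M₂ j l * ((ε j : ℝ):ℂ) * ((ε l : ℝ):ℂ) := by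
    have hMlj : M₂ l j = 0 := by simp [hM, Ne.symm hjl]
    rcases mderiv_of_pair (α := fun i => if i = j then (1:ℕ) else if i = l then 1 else 0)
        (u := fun t x => (fun _ _ => (1:ℂ)) t x * quadF 0 0 0
          (fun i => (0:ℂ) * ((ε i : ℝ):ℂ)) (fun i => (0:ℂ) * ((ε i : ℝ):ℂ))
          (fun i m => M₂ i m * ((ε i : ℝ):ℂ) * ((ε m : ℝ):ℂ)) t x)
        j l hjl (fun i hij hil => by simp [hij, hil]) with hm | hm
    · rw [hm]
      simp only [eq_self_iff_true, if_true, if_neg (Ne.symm hjl), Function.iterate_one,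
        Function.iterate_zero, id_eq]
      rw [EQ_valkl smooth_one j l, px_c0, px_c0, hMlj]
      simp
    · rw [hm]
      simp only [eq_self_iff_true, if_true, if_neg (Ne.symm hjl), Function.iterate_one,
        Function.iterate_zero, id_eq]
      rw [EQ_valkl smooth_one l j, px_c0, px_c0, hMlj]
      simp
  have hD₂ : (pt^[(0:ℕ)] (mderiv (fun i => if i = j then (1:ℕ) else if i = l then 1 else 0)
      (quadF 0 0 0 0 0 M₂))) 0 0 = M₂ j l := by
    have hMlj : M₂ l j = 0 := by simp [hM, Ne.symm hjl]
    rcases mderiv_of_pair (α := fun i => if i = j then (1:ℕ) else if i = l then 1 else 0)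
        (u := quadF 0 0 0 0 0 M₂)
        j l hjl (fun i hij hil => by simp [hij, hil]) with hm | hm
    · rw [hm]
      simp only [eq_self_iff_true, if_true, if_neg (Ne.symm hjl), Function.iterate_one,
        Function.iterate_zero, id_eq]
      show px j (px l (quadF 0 0 0 0 0 M₂)) 0 0 = M₂ j l
      rw [quad_px, quad_px]
      exact quad_val0.trans (by rw [hMlj]; ring)
    · rw [hm]
      simp only [eq_self_iff_true, if_true, if_neg (Ne.symm hjl), Function.iterate_one,
        Function.iterate_zero, id_eq]
      show px l (px j (quadF 0 0 0 0 0 M₂)) 0 0 = M₂ j l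
      rw [quad_px, quad_px]
      exact quad_val0.trans (by rw [hMlj]; ring)
  simp only [hD₁, hD₂] at key
  have hεj : ((ε j : ℝ):ℂ) = -1 := by simp [hε]
  have hεl : ((ε l : ℝ):ℂ) = 1 := by simp [hε, Ne.symm hjl]
  have hMjl : M₂ j l = 1 := by simp [hM]
  rw [hεj, hεl, hMjl] at key
  have : (2:ℂ) * a (0, fun i => if i = j then 1 else if i = l then 1 else 0) = 0 := by
    linear_combination -key
  simpa using this

lemma step_r4 (a : ℕ × (Fin n → ℕ) → ℂ)
    (hrot : ∀ R ∈ Matrix.orthogonalGroup (Fin n) ℝ,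
      ∀ u : ℝ → (Fin n → ℝ) → ℂ, SmoothFn u → ∀ (t : ℝ) (x : Fin n → ℝ),
        applyOpC 2 a (fun t' x' => u t' (R.mulVec x')) t x = applyOpC 2 a u t (R.mulVec x))
    (j l : Fin n) (hjl : j ≠ l) :
    a (0, fun i => if i = j then 2 else 0) = a (0, fun i => if i = l then 2 else 0) := by
  classical
  set σ : Equiv.Perm (Fin n) := Equiv.swap j l with hσdef
  set M₂ : Fin n → Fin n → ℂ := fun i m => (if i = j then 1 else 0) * (if m = j then 1 else 0)
    with hM
  have hσσ : ∀ i, σ (σ i) = i := fun i => Equiv.swap_apply_self j l i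
  have heq := hrot _ (permM_mem σ) (quadF 0 0 0 0 0 M₂) smooth_quad 0 0
  rw [show (fun t' x' => quadF 0 0 0 0 0 M₂ t' ((permM σ).mulVec x'))
      = quadF 0 0 0 (fun i => (0 : Fin n → ℂ) (σ i)) (fun i => (0 : Fin n → ℂ) (σ i))
          (fun i m => M₂ (σ i) (σ m)) from quad_comp_perm σ hσσ,
    Matrix.mulVec_zero] at heq
  rw [one_mul_fun (quadF 0 0 0 (fun i => (0 : Fin n → ℂ) (σ i)) (fun i => (0 : Fin n → ℂ) (σ i))
      (fun i m => M₂ (σ i) (σ m)))] at heq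
  simp only [applyOpC] at heq
  have hp₀ : ((0:ℕ), fun i => if i = j then (2:ℕ) else 0) ∈ idxSet n 2 := by
    rw [mem_idxSet_iff]
    simp [sum_two_eq]
  have hp₁ : ((0:ℕ), fun i => if i = l then (2:ℕ) else 0) ∈ idxSet n 2 := by
    rw [mem_idxSet_iff]
    simp [sum_two_eq]
  have hne01 : ((0:ℕ), fun i => if i = j then (2:ℕ) else 0)
      ≠ ((0:ℕ), fun i => if i = l then (2:ℕ) else 0) := by
    intro h
    have := congrFun (congrArg Prod.snd h) j
    simp [hjl] at this
  have hMoff : ∀ A B : Fin n, A ≠ B → M₂ A B = 0 := by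
    intro A B hAB
    by_cases hA : A = j
    · by_cases hB : B = j
      · exact absurd (hA.trans hB.symm) hAB
      · simp [hM, hB]
    · simp [hM, hA]
  have key := sum_cancel₂ (idxSet n 2) _ _ heq hp₀ hp₁ hne01 ?hoth
  case hoth =>
    rintro ⟨jj, α⟩ hp hne₀ hne₁
    have hb := mem_idxSet_iff.mp hp
    rcases Dmaster (E := fun _ _ => (1:ℂ)) smooth_one 0 0
        (fun i => (0 : Fin n → ℂ) (σ i)) (fun i => (0 : Fin n → ℂ) (σ i))
        (fun i m => M₂ (σ i) (σ m))
        0 0 0 0 0 M₂ jj α hb with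
      ⟨hj, hα, hV₁, hV₂⟩ | ⟨hj, hα, hV₁, hV₂⟩ | ⟨hj, hα, hV₁, hV₂⟩ |
      ⟨k, hj, hα, hV₁, hV₂⟩ | ⟨k, hj, hα, hV₁, hV₂⟩ | ⟨k, hj, hα, hV₁, hV₂⟩ |
      ⟨k, l', hkl', hj, hα, hV₁, hV₂⟩
    · rw [hV₁, hV₂]
    · rw [hV₁, hV₂]; all_goals ring
    · rw [hV₁, hV₂]; all_goals ring
    · rw [hV₁, hV₂]
      all_goals simp
    · rw [hV₁, hV₂, pt_c0, px_c0]
      all_goals simp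
    · -- diagonal class, k ≠ j and k ≠ l
      subst hj; subst hα
      have hkj : k ≠ j := by
        rintro rfl
        exact hne₀ rfl
      have hkl : k ≠ l := by
        rintro rfl
        exact hne₁ rfl
      have hσk : σ k = k := Equiv.swap_apply_of_ne_of_ne hkj hkl
      rw [hV₁, hV₂, px_c0, hσk]
      have hMkk : M₂ k k = 0 := by simp [hM, hkj]
      rw [hMkk]
      ring
    · -- pair class: both M-values vanish
      have h1 : M₂ (σ l') (σ k) = 0 := hMoff _ _ (fun h => hkl' (σ.injective h).symm)
      have h2 : M₂ (σ k) (σ l') = 0 := hMoff _ _ (fun h => hkl' (σ.injective h))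
      have h3 : M₂ k l' = 0 := hMoff _ _ hkl'
      have h4 : M₂ l' k = 0 := hMoff _ _ (Ne.symm hkl')
      rw [hV₁, hV₂, px_c0, px_c0, h1, h2, h3, h4]
      ring
  -- evaluate the two distinguished terms
  have hσj : σ j = l := Equiv.swap_apply_left j l
  have hσl : σ l = j := Equiv.swap_apply_right j l
  have hD₁j : (pt^[(0:ℕ)] (mderiv (fun i => if i = j then (2:ℕ) else 0)
      (fun t x => (fun _ _ => (1:ℂ)) t x * quadF 0 0 0 (fun i => (0 : Fin n → ℂ) (σ i))
        (fun i => (0 : Fin n → ℂ) (σ i)) (fun i m => M₂ (σ i) (σ m)) t x))) 0 0 = 0 := by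
    rw [mderiv_of_single j (fun i hi => by simp [hi])]
    simp only [eq_self_iff_true, if_true]
    show px j (px j _) 0 0 = 0
    rw [EQ_val2k smooth_one j, px_c0, hσj]
    have : M₂ l l = 0 := by simp [hM, Ne.symm hjl]
    rw [this]
    ring
  have hD₂j : (pt^[(0:ℕ)] (mderiv (fun i => if i = j then (2:ℕ) else 0)
      (quadF 0 0 0 0 0 M₂))) 0 0 = 2 := by
    rw [mderiv_of_single j (fun i hi => by simp [hi])]
    simp only [eq_self_iff_true, if_true]
    show px j (px j (quadF 0 0 0 0 0 M₂)) 0 0 = 2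
    rw [quad_px, quad_px]
    refine quad_val0.trans ?_
    simp [hM]
    norm_num
  have hD₁l : (pt^[(0:ℕ)] (mderiv (fun i => if i = l then (2:ℕ) else 0)
      (fun t x => (fun _ _ => (1:ℂ)) t x * quadF 0 0 0 (fun i => (0 : Fin n → ℂ) (σ i))
        (fun i => (0 : Fin n → ℂ) (σ i)) (fun i m => M₂ (σ i) (σ m)) t x))) 0 0 = 2 := by
    rw [mderiv_of_single l (fun i hi => by simp [hi])]
    simp only [eq_self_iff_true, if_true]
    show px l (px l _) 0 0 = 2
    rw [EQ_val2k smooth_one l, px_c0, hσl]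
    have : M₂ j j = 1 := by simp [hM]
    rw [this]
    norm_num
  have hD₂l : (pt^[(0:ℕ)] (mderiv (fun i => if i = l then (2:ℕ) else 0)
      (quadF 0 0 0 0 0 M₂))) 0 0 = 0 := by
    rw [mderiv_of_single l (fun i hi => by simp [hi])]
    simp only [eq_self_iff_true, if_true]
    show px l (px l (quadF 0 0 0 0 0 M₂)) 0 0 = 0
    rw [quad_px, quad_px]
    refine quad_val0.trans ?_
    have : M₂ l l = 0 := by simp [hM, Ne.symm hjl]
    rw [this]
    ring
  simp only [hD₁j, hD₂j, hD₁l, hD₂l] at key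
  have h2 : (2:ℂ) * (a (0, fun i => if i = l then (2:ℕ) else 0)
      - a (0, fun i => if i = j then (2:ℕ) else 0)) = 0 := by linear_combination key
  have := mul_eq_zero.mp h2
  rcases this with h | h
  · norm_num at h
  · linear_combination -h

lemma step_g1 (a : ℕ × (Fin n → ℕ) → ℂ)
    (hgal : ∀ v : Fin n → ℝ, ∃ θ : ℝ → (Fin n → ℝ) → ℝ, SmoothR θ ∧
      ∀ u : ℝ → (Fin n → ℝ) → ℂ, SmoothFn u → ∀ (t : ℝ) (x : Fin n → ℝ),
        applyOpC 2 a
            (fun t' x' => Complex.exp (Complex.I * ((θ t' x' : ℝ) : ℂ)) * u t' (x' - t' • v)) t x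
          = Complex.exp (Complex.I * ((θ t x : ℝ) : ℂ)) * applyOpC 2 a u t (x - t • v))
    (j : Fin n) :
    a (2, fun _ => 0) = 0 := by
  classical
  set v : Fin n → ℝ := fun i => if i = j then 1 else 0 with hv
  obtain ⟨θ, hθ, hG⟩ := hgal v
  have hEs : SmoothFn (fun t x => Complex.exp (Complex.I * ((θ t x : ℝ) : ℂ))) :=
    smooth_expTheta hθ
  set sv₂ : Fin n → ℂ := fun i => if i = j then 1 else 0 with hsv
  have heq := hG (quadF 0 0 0 0 sv₂ 0) smooth_quad 0 0
  have hsh := quad_shift_sv sv₂ v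
  rw [show (fun t' x' => Complex.exp (Complex.I * ((θ t' x' : ℝ) : ℂ))
        * quadF 0 0 0 0 sv₂ 0 t' (x' - t' • v))
      = fun t x => Complex.exp (Complex.I * ((θ t x : ℝ) : ℂ))
        * quadF 0 0 (-∑ i, sv₂ i * ((v i : ℝ):ℂ)) 0 sv₂ 0 t x from by
      funext t x
      exact congrArg _ (congrFun (congrFun hsh t) x)] at heq
  rw [show (0:Fin n → ℝ) - (0:ℝ) • v = 0 from by simp] at heq
  simp only [applyOpC] at heq
  rw [Finset.mul_sum] at heq
  have hp₀ : ((2:ℕ), (fun _ => 0 : Fin n → ℕ)) ∈ idxSet n 2 := by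
    rw [mem_idxSet_iff]
    simp
  have key := sum_cancel₁ (idxSet n 2) _ _ heq hp₀ ?hoth
  case hoth =>
    rintro ⟨jj, α⟩ hp hne
    have hb := mem_idxSet_iff.mp hp
    rcases Dmaster (E := fun t x => Complex.exp (Complex.I * ((θ t x : ℝ) : ℂ))) hEs
        0 (-∑ i, sv₂ i * ((v i : ℝ):ℂ)) 0 sv₂ 0
        0 0 0 0 sv₂ 0 jj α hb with
      ⟨hj, hα, hV₁, hV₂⟩ | ⟨hj, hα, hV₁, hV₂⟩ | ⟨hj, hα, hV₁, hV₂⟩ |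
      ⟨k, hj, hα, hV₁, hV₂⟩ | ⟨k, hj, hα, hV₁, hV₂⟩ | ⟨k, hj, hα, hV₁, hV₂⟩ |
      ⟨k, l, hkl, hj, hα, hV₁, hV₂⟩
    · rw [hV₁, hV₂]; all_goals ring
    · rw [hV₁, hV₂]; all_goals ring
    · subst hj; subst hα
      exact (hne rfl).elim
    · rw [hV₁, hV₂]
      simp only [Pi.zero_apply, mul_zero, zero_mul, add_zero, zero_add]
      all_goals ring
    · rw [hV₁, hV₂]
      simp only [Pi.zero_apply, mul_zero, zero_mul, add_zero, zero_add]
      all_goals ring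
    · rw [hV₁, hV₂]
      simp only [Pi.zero_apply, mul_zero, zero_mul, add_zero, zero_add]
      all_goals ring
    · rw [hV₁, hV₂]
      simp only [Pi.zero_apply, mul_zero, zero_mul, add_zero, zero_add]
      all_goals ring
  have hD₁ : (pt^[(2:ℕ)] (mderiv (fun _ => 0 : Fin n → ℕ)
      (fun t x => Complex.exp (Complex.I * ((θ t x : ℝ) : ℂ))
        * quadF 0 0 (-∑ i, sv₂ i * ((v i : ℝ):ℂ)) 0 sv₂ 0 t x))) 0 0
      = 2*(pt (fun t x => Complex.exp (Complex.I * ((θ t x : ℝ) : ℂ))) 0 0)*0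
        + Complex.exp (Complex.I * ((θ 0 0 : ℝ) : ℂ)) * (2*(-∑ i, sv₂ i * ((v i : ℝ):ℂ))) := by
    rw [mderiv_of_zero (fun i => rfl)]
    exact EQ_val20 hEs
  have hD₂ : (pt^[(2:ℕ)] (mderiv (fun _ => 0 : Fin n → ℕ) (quadF 0 0 0 0 sv₂ 0))) 0 0
      = 2 * (0:ℂ) := by
    rw [mderiv_of_zero (fun i => rfl)]
    show pt (pt (quadF 0 0 0 0 sv₂ 0)) 0 0 = 2 * 0
    rw [quad_pt, quad_pt]
    exact quad_val0.trans (by norm_num)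
  have hee : (∑ i, sv₂ i * ((v i : ℝ):ℂ)) = 1 := by
    rw [Finset.sum_congr rfl (fun i _ => show sv₂ i * ((v i : ℝ):ℂ)
      = (if i = j then (1:ℂ) else 0) from by by_cases h : i = j <;> simp [hsv, hv, h])]
    simp [Finset.sum_ite_eq']
  simp only [hD₁, hD₂] at key
  rw [hee] at key
  have hE0 : Complex.exp (Complex.I * ((θ 0 0 : ℝ):ℂ)) ≠ 0 := Complex.exp_ne_zero _
  have h2 : a (2, fun _ => 0) * Complex.exp (Complex.I * ((θ 0 0 : ℝ):ℂ)) * 2 = 0 := by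
    linear_combination -key
  rcases mul_eq_zero.mp h2 with h | h
  · rcases mul_eq_zero.mp h with h' | h'
    · exact h'
    · exact absurd h' hE0
  · norm_num at h

lemma step_g3 (a : ℕ × (Fin n → ℕ) → ℂ)
    (hgal : ∀ v : Fin n → ℝ, ∃ θ : ℝ → (Fin n → ℝ) → ℝ, SmoothR θ ∧
      ∀ u : ℝ → (Fin n → ℝ) → ℂ, SmoothFn u → ∀ (t : ℝ) (x : Fin n → ℝ),
        applyOpC 2 a
            (fun t' x' => Complex.exp (Complex.I * ((θ t' x' : ℝ) : ℂ)) * u t' (x' - t' • v)) t x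
          = Complex.exp (Complex.I * ((θ t x : ℝ) : ℂ)) * applyOpC 2 a u t (x - t • v))
    (j : Fin n)
    (hF1 : ∀ k : Fin n, a (0, fun i => if i = k then 1 else 0) = 0)
    (hF2 : ∀ k : Fin n, a (1, fun i => if i = k then 1 else 0) = 0)
    (hF3 : ∀ k l : Fin n, k ≠ l →
      a (0, fun i => if i = k then 1 else if i = l then 1 else 0) = 0)
    (hF5 : a (2, fun _ => 0) = 0) :
    ∃ r : ℝ, a (1, fun _ => 0)
      = 2 * a (0, fun i => if i = j then 2 else 0) * Complex.I * (r:ℂ) := by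
  classical
  set v : Fin n → ℝ := fun i => if i = j then 1 else 0 with hv
  obtain ⟨θ, hθ, hG⟩ := hgal v
  have hEs : SmoothFn (fun t x => Complex.exp (Complex.I * ((θ t x : ℝ) : ℂ))) :=
    smooth_expTheta hθ
  set pv₂ : Fin n → ℂ := fun i => if i = j then 1 else 0 with hpv
  refine ⟨pxR j θ 0 0, ?_⟩
  have heq := hG (quadF 0 0 0 pv₂ 0 0) smooth_quad 0 0
  have hsh := quad_shift_lin pv₂ v
  rw [show (fun t' x' => Complex.exp (Complex.I * ((θ t' x' : ℝ) : ℂ))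
        * quadF 0 0 0 pv₂ 0 0 t' (x' - t' • v))
      = fun t x => Complex.exp (Complex.I * ((θ t x : ℝ) : ℂ))
        * quadF 0 (-∑ i, pv₂ i * ((v i : ℝ):ℂ)) 0 pv₂ 0 0 t x from by
      funext t x
      exact congrArg _ (congrFun (congrFun hsh t) x)] at heq
  rw [show (0:Fin n → ℝ) - (0:ℝ) • v = 0 from by simp] at heq
  simp only [applyOpC] at heq
  rw [Finset.mul_sum] at heq
  have hp₀ : ((1:ℕ), (fun _ => 0 : Fin n → ℕ)) ∈ idxSet n 2 := by
    rw [mem_idxSet_iff]; simp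
  have hp₁ : ((0:ℕ), fun i => if i = j then (2:ℕ) else 0) ∈ idxSet n 2 := by
    rw [mem_idxSet_iff]; simp [sum_two_eq]
  have hne01 : ((1:ℕ), (fun _ => 0 : Fin n → ℕ))
      ≠ ((0:ℕ), fun i => if i = j then (2:ℕ) else 0) := by
    intro h
    simpa using congrArg Prod.fst h
  have key := sum_cancel₂ (idxSet n 2) _ _ heq hp₀ hp₁ hne01 ?hoth
  case hoth =>
    rintro ⟨jj, α⟩ hp hne₀ hne₁
    have hb := mem_idxSet_iff.mp hp
    rcases Dmaster (E := fun t x => Complex.exp (Complex.I * ((θ t x : ℝ) : ℂ))) hEs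
        (-∑ i, pv₂ i * ((v i : ℝ):ℂ)) 0 pv₂ 0 0
        0 0 0 pv₂ 0 0 jj α hb with
      ⟨hj, hα, hV₁, hV₂⟩ | ⟨hj, hα, hV₁, hV₂⟩ | ⟨hj, hα, hV₁, hV₂⟩ |
      ⟨k, hj, hα, hV₁, hV₂⟩ | ⟨k, hj, hα, hV₁, hV₂⟩ | ⟨k, hj, hα, hV₁, hV₂⟩ |
      ⟨k, l, hkl, hj, hα, hV₁, hV₂⟩
    · rw [hV₁, hV₂]; all_goals ring
    · subst hj; subst hα
      exact (hne₀ rfl).elim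
    · subst hj; subst hα
      rw [hF5]
      simp
    · subst hj; subst hα
      rw [hF1 k]
      simp
    · subst hj; subst hα
      rw [hF2 k]
      simp
    · subst hj; subst hα
      have hkj : k ≠ j := by
        rintro rfl
        exact hne₁ rfl
      rw [hV₁, hV₂]
      simp [hpv, hkj]
    · subst hj; subst hα
      rw [hF3 k l hkl]
      simp
  have hD₁p₀ : (pt^[(1:ℕ)] (mderiv (fun _ => 0 : Fin n → ℕ)
      (fun t x => Complex.exp (Complex.I * ((θ t x : ℝ) : ℂ))
        * quadF 0 (-∑ i, pv₂ i * ((v i : ℝ):ℂ)) 0 pv₂ 0 0 t x))) 0 0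
      = Complex.exp (Complex.I * ((θ 0 0 : ℝ) : ℂ)) * (-∑ i, pv₂ i * ((v i : ℝ):ℂ)) := by
    rw [mderiv_of_zero (fun i => rfl), Function.iterate_one]
    exact EQ_val10 hEs
  have hD₂p₀ : (pt^[(1:ℕ)] (mderiv (fun _ => 0 : Fin n → ℕ)
      (quadF 0 0 0 pv₂ 0 0))) 0 0 = 0 := by
    rw [mderiv_of_zero (fun i => rfl), Function.iterate_one, quad_pt]
    exact quad_val0
  have hD₁p₁ : (pt^[(0:ℕ)] (mderiv (fun i => if i = j then (2:ℕ) else 0)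
      (fun t x => Complex.exp (Complex.I * ((θ t x : ℝ) : ℂ))
        * quadF 0 (-∑ i, pv₂ i * ((v i : ℝ):ℂ)) 0 pv₂ 0 0 t x))) 0 0
      = 2*(px j (fun t x => Complex.exp (Complex.I * ((θ t x : ℝ) : ℂ))) 0 0)*pv₂ j
        + Complex.exp (Complex.I * ((θ 0 0 : ℝ) : ℂ))
          * ((0 : Fin n → Fin n → ℂ) j j + (0 : Fin n → Fin n → ℂ) j j) := by
    rw [mderiv_of_single j (fun i hi => by simp [hi])]
    simp only [eq_self_iff_true, if_true]
    exact EQ_val2k hEs j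
  have hD₂p₁ : (pt^[(0:ℕ)] (mderiv (fun i => if i = j then (2:ℕ) else 0)
      (quadF 0 0 0 pv₂ 0 0))) 0 0 = 0 := by
    rw [mderiv_of_single j (fun i hi => by simp [hi])]
    simp only [eq_self_iff_true, if_true]
    show px j (px j (quadF 0 0 0 pv₂ 0 0)) 0 0 = 0
    rw [quad_px, quad_px]
    refine quad_val0.trans ?_
    simp
  have hee : (∑ i, pv₂ i * ((v i : ℝ):ℂ)) = 1 := by
    rw [Finset.sum_congr rfl (fun i _ => show pv₂ i * ((v i : ℝ):ℂ)
      = (if i = j then (1:ℂ) else 0) from by by_cases h : i = j <;> simp [hpv, hv, h])]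
    simp [Finset.sum_ite_eq']
  simp only [hD₁p₀, hD₂p₀, hD₁p₁, hD₂p₁] at key
  rw [hee] at key
  rw [pxE_val hθ j] at key
  have hpvj : pv₂ j = 1 := by simp [hpv]
  rw [hpvj] at key
  have hE0 : Complex.exp (Complex.I * ((θ 0 0 : ℝ):ℂ)) ≠ 0 := Complex.exp_ne_zero _
  have h2 : (a (1, fun _ => 0)
      - 2 * a (0, fun i => if i = j then 2 else 0) * Complex.I * ((pxR j θ 0 0 : ℝ):ℂ))
      * Complex.exp (Complex.I * ((θ 0 0 : ℝ):ℂ)) = 0 := by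
    simp only [Pi.zero_apply] at key
    linear_combination -key
  rcases mul_eq_zero.mp h2 with h | h
  · linear_combination h
  · exact absurd h hE0

end Tool


/-- a Galilei-invariant second-order operator is `α(2iλ∂_t + Δ) + β`. -/
theorem second_order_characterization {n : ℕ} (hn : 2 ≤ n)
    (a : ℕ × (Fin n → ℕ) → ℂ)
    (htop : ∃ p ∈ idxSet n 2, p.1 + ∑ k, p.2 k = 2 ∧ a p ≠ 0)
    (hrot : ∀ R ∈ Matrix.orthogonalGroup (Fin n) ℝ,
      ∀ u : ℝ → (Fin n → ℝ) → ℂ, SmoothFn u → ∀ (t : ℝ) (x : Fin n → ℝ),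
        applyOpC 2 a (fun t' x' => u t' (R.mulVec x')) t x = applyOpC 2 a u t (R.mulVec x))
    (hgal : ∀ v : Fin n → ℝ, ∃ θ : ℝ → (Fin n → ℝ) → ℝ, SmoothR θ ∧
      ∀ u : ℝ → (Fin n → ℝ) → ℂ, SmoothFn u → ∀ (t : ℝ) (x : Fin n → ℝ),
        applyOpC 2 a
            (fun t' x' => Complex.exp (Complex.I * ((θ t' x' : ℝ) : ℂ)) * u t' (x' - t' • v)) t x
          = Complex.exp (Complex.I * ((θ t x : ℝ) : ℂ)) * applyOpC 2 a u t (x - t • v)) :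
    ∃ (α : ℂ) (lam : ℝ) (β : ℂ), α ≠ 0 ∧
      (∀ u : ℝ → (Fin n → ℝ) → ℂ, SmoothFn u → ∀ (t : ℝ) (x : Fin n → ℝ),
        applyOpC 2 a u t x
          = α * (2 * Complex.I * (lam : ℂ) * pt u t x + lap u t x) + β * u t x) ∧
      a (2, fun _ => 0) = 0 ∧
      (∀ k l : Fin n, a (0, fun j => if j = k then 2 else 0)
          = a (0, fun j => if j = l then 2 else 0)) ∧
      (∀ p ∈ idxSet n 2, p ≠ (0, fun _ => 0) → p ≠ (1, fun _ => 0) →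
        (∀ k : Fin n, p ≠ (0, fun j => if j = k then 2 else 0)) → a p = 0) ∧
      (Complex.I * a (1, fun _ => 0) / α).im = 0 := by
  classical
  have h0n : 0 < n := by omega
  set j0 : Fin n := ⟨0, h0n⟩ with hj0
  have hF1 : ∀ k : Fin n, a (0, fun i => if i = k then 1 else 0) = 0 := Tool.step_r1 a hrot
  have hF2 : ∀ k : Fin n, a (1, fun i => if i = k then 1 else 0) = 0 := Tool.step_r2 a hrot
  have hF3 : ∀ k l : Fin n, k ≠ l →
      a (0, fun i => if i = k then 1 else if i = l then 1 else 0) = 0 :=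
    fun k l h => Tool.step_r3 a hrot k l h
  have hF4 : ∀ k l : Fin n, a (0, fun i => if i = k then 2 else 0)
      = a (0, fun i => if i = l then 2 else 0) := by
    intro k l
    by_cases h : k = l
    · rw [h]
    · exact Tool.step_r4 a hrot k l h
  have hF5 : a (2, fun _ => 0) = 0 := Tool.step_g1 a hgal j0
  obtain ⟨r, hF6⟩ := Tool.step_g3 a hgal j0 hF1 hF2 hF3 hF5
  set c : ℂ := a (0, fun i => if i = j0 then 2 else 0) with hc
  have hvanish : ∀ p ∈ idxSet n 2, p ≠ (0, fun _ => 0) → p ≠ (1, fun _ => 0) →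
      (∀ k : Fin n, p ≠ (0, fun j => if j = k then 2 else 0)) → a p = 0 := by
    rintro ⟨j, α⟩ hp h1 h2 h3
    have hb := Tool.mem_idxSet_iff.mp hp
    simp only at hb
    rcases Tool.classify_alpha α (by omega) with h0 | ⟨k, hk⟩ | ⟨k, hk⟩ | ⟨k, l, hkl, hk⟩
    · subst h0
      have hs : (∑ i : Fin n, (0:ℕ)) = 0 := by simp
      rw [hs] at hb
      have hjle : j ≤ 2 := by omega
      interval_cases j
      · exact (h1 rfl).elim
      · exact (h2 rfl).elim
      · exact hF5
    · subst hk
      rw [Tool.sum_single_eq k] at hb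
      have hjle : j ≤ 1 := by omega
      interval_cases j
      · exact hF1 k
      · exact hF2 k
    · subst hk
      rw [Tool.sum_two_eq k] at hb
      have hj : j = 0 := by omega
      subst hj
      exact (h3 k rfl).elim
    · subst hk
      rw [Tool.sum_pairfn_eq hkl] at hb
      have hj : j = 0 := by omega
      subst hj
      exact hF3 k l hkl
  have hcall : ∀ k : Fin n, a (0, fun i => if i = k then 2 else 0) = c := fun k => hF4 k j0
  have hcne : c ≠ 0 := by
    obtain ⟨⟨j, α⟩, hpmem, hdeg, hane⟩ := htop
    simp only at hdeg
    intro hc0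
    apply hane
    rcases Tool.classify_alpha α (by omega) with h0 | ⟨k, hk⟩ | ⟨k, hk⟩ | ⟨k, l, hkl, hk⟩
    · subst h0
      have hs : (∑ i : Fin n, (0:ℕ)) = 0 := by simp
      rw [hs] at hdeg
      have : j = 2 := by omega
      subst this
      exact hF5
    · subst hk
      rw [Tool.sum_single_eq k] at hdeg
      have : j = 1 := by omega
      subst this
      exact hF2 k
    · subst hk
      rw [Tool.sum_two_eq k] at hdeg
      have : j = 0 := by omega
      subst this
      rw [hcall k]
      exact hc0
    · subst hk
      rw [Tool.sum_pairfn_eq hkl] at hdeg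
      have : j = 0 := by omega
      subst this
      exact hF3 k l hkl
  refine ⟨c, r, a (0, fun _ => 0), hcne, ?_, hF5, hF4, hvanish, ?_⟩
  · -- the operator identity
    intro u _ t x
    have hm1 : ((0:ℕ), (fun _ => 0 : Fin n → ℕ)) ∉
        insert ((1:ℕ), (fun _ => 0 : Fin n → ℕ))
          (Finset.univ.image (fun k : Fin n => ((0:ℕ), fun i => if i = k then (2:ℕ) else 0))) := by
      intro h
      rcases Finset.mem_insert.mp h with h | h
      · exact absurd (congrArg Prod.fst h) (by norm_num)
      · obtain ⟨k, _, hk⟩ := Finset.mem_image.mp h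
        have := congrFun (congrArg Prod.snd hk) k
        simp at this
    have hm2 : ((1:ℕ), (fun _ => 0 : Fin n → ℕ)) ∉
        Finset.univ.image (fun k : Fin n => ((0:ℕ), fun i => if i = k then (2:ℕ) else 0)) := by
      intro h
      obtain ⟨k, _, hk⟩ := Finset.mem_image.mp h
      exact absurd (congrArg Prod.fst hk) (by norm_num)
    have hTsub : insert ((0:ℕ), (fun _ => 0 : Fin n → ℕ))
        (insert ((1:ℕ), (fun _ => 0 : Fin n → ℕ))
          (Finset.univ.image (fun k : Fin n => ((0:ℕ), fun i => if i = k then (2:ℕ) else 0))))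
        ⊆ idxSet n 2 := by
      intro p hp
      rcases Finset.mem_insert.mp hp with rfl | hp
      · rw [Tool.mem_idxSet_iff]; simp
      rcases Finset.mem_insert.mp hp with rfl | hp
      · rw [Tool.mem_idxSet_iff]; simp
      obtain ⟨k, _, rfl⟩ := Finset.mem_image.mp hp
      rw [Tool.mem_idxSet_iff]
      rw [show ((0:ℕ), fun i => if i = k then (2:ℕ) else 0).2 = fun i => if i = k then (2:ℕ) else 0 from rfl]
      rw [show ((0:ℕ), fun i => if i = k then (2:ℕ) else 0).1 = (0:ℕ) from rfl]
      rw [Tool.sum_two_eq k]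
    have hzero : ∀ p ∈ idxSet n 2, p ∉ insert ((0:ℕ), (fun _ => 0 : Fin n → ℕ))
        (insert ((1:ℕ), (fun _ => 0 : Fin n → ℕ))
          (Finset.univ.image (fun k : Fin n => ((0:ℕ), fun i => if i = k then (2:ℕ) else 0)))) →
        a p * (pt^[p.1] (mderiv p.2 u)) t x = 0 := by
      intro p hp hpT
      simp only [Finset.mem_insert, Finset.mem_image, not_or, not_exists] at hpT
      obtain ⟨hp1, hp2, hp3⟩ := hpT
      rw [hvanish p hp hp1 hp2 (fun k => by
        intro h
        exact hp3 k ⟨Finset.mem_univ k, h.symm⟩), zero_mul]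
    have hinj : ∀ x₁ ∈ Finset.univ, ∀ x₂ ∈ Finset.univ,
        (fun k : Fin n => ((0:ℕ), fun i => if i = k then (2:ℕ) else 0)) x₁
          = (fun k : Fin n => ((0:ℕ), fun i => if i = k then (2:ℕ) else 0)) x₂ → x₁ = x₂ := by
      intro k _ k' _ h
      have := congrFun (congrArg Prod.snd h) k
      simp only [if_pos rfl] at this
      by_cases hkk : k = k'
      · exact hkk
      · rw [if_neg hkk] at this
        norm_num at this
    have hsplit := Finset.sum_subset hTsub hzero
    show applyOpC 2 a u t x = _
    have : applyOpC 2 a u t x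
        = ∑ p ∈ insert ((0:ℕ), (fun _ => 0 : Fin n → ℕ))
        (insert ((1:ℕ), (fun _ => 0 : Fin n → ℕ))
          (Finset.univ.image (fun k : Fin n => ((0:ℕ), fun i => if i = k then (2:ℕ) else 0)))),
          a p * (pt^[p.1] (mderiv p.2 u)) t x := hsplit.symm
    rw [this, Finset.sum_insert hm1, Finset.sum_insert hm2, Finset.sum_image hinj]
    have t1 : (pt^[(0:ℕ)] (mderiv (fun _ => (0:ℕ) : Fin n → ℕ) u)) t x = u t x := by
      rw [Tool.mderiv_of_zero (fun i => rfl)]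
      rfl
    have t2 : (pt^[(1:ℕ)] (mderiv (fun _ => (0:ℕ) : Fin n → ℕ) u)) t x = pt u t x := by
      rw [Tool.mderiv_of_zero (fun i => rfl), Function.iterate_one]
    have t3 : ∀ k : Fin n, (pt^[(0:ℕ)] (mderiv (fun i => if i = k then (2:ℕ) else 0) u)) t x
        = px k (px k u) t x := by
      intro k
      rw [Tool.mderiv_of_single k (fun i hi => by simp [hi])]
      simp only [eq_self_iff_true, if_true]
      rfl
    rw [t1, t2]
    rw [Finset.sum_congr rfl (fun k _ => by rw [t3 k, hcall k])]
    rw [hF6, ← Finset.mul_sum]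
    simp only [lap]
    ring
  · -- imaginary part
    rw [hF6]
    have hval : Complex.I * (2 * c * Complex.I * (r:ℂ)) / c = ((-2*r : ℝ):ℂ) := by
      have : Complex.I * (2 * c * Complex.I * (r:ℂ))
          = ((-2*r : ℝ):ℂ) * c := by
        push_cast
        have hI := Complex.I_mul_I
        linear_combination (2 * c * (r:ℂ)) * hI
      rw [this, mul_div_assoc, div_self hcne, mul_one]
    rw [hval]
    exact Complex.ofReal_im _
end
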